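/- arXiv:math/0609677 — 3 statements merged into one kernel-verified Lean document; each statement's English description precedes it below -/
import Mathlib

section
/- Let ρ : ℂ^N × ℂ^N → ℂ^d be holomorphic near (0,0) with ρ(0,0) = 0, ∂ρ/∂Z(0,0) surjective, and the reality condition ρ(Z,ζ) = conj(ρ(conj ζ, conj Z)). Let z̃ : ℂ^N → ℂ^{N−d} be holomorphic near 0 with z̃(0) = 0, Dz̃(0) surjective, and ℂ^N = ker(∂ρ/∂Z(0,0)) ⊕ ker(Dz̃(0)). Set W := z̃⁻¹(0) (near 0). Then there exist open neighborhoods V of 0 in ℂ^N and X of 0 in ℂ^{N−d}, a relatively open neighborhood Y of 0 in W, a map ι : Y → Y, and a holomorphic map w̃ : V → ℂ^N with w̃(0) = 0 and w̃(V) ⊆ W, such that: (a) for every p ∈ Y, {q ∈ Y : ρ(q, conj p) = 0} = {ι(p)} and ι(ι(p)) = p; (b) the map Φ(Z) := (z̃(Z), w̃(Z)) is a bijection from V onto X × Y; (c) for every p ∈ Y, {Z ∈ V : ρ(Z, conj p) = 0} = {Z ∈ V : w̃(Z) = ι(p)} (i.e., Φ maps Σ_p ∩ V onto X × {ι(p)}).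 Moreover w̃ is unique: any holomorphic map defined near 0, valued in W, and satisfying (c) for all p ∈ Y agrees with w̃ on a neighborhood of 0. -/
open Filter

/-- Componentwise complex conjugation on `ℂ^N`. -/
noncomputable def conjV {N : ℕ} (Z : Fin N → ℂ) : Fin N → ℂ := fun i => (starRingEnd ℂ) (Z i)

open scoped ENNReal NNReal
open Filter Metric

lemma conjV_norm {N : ℕ} (Z : Fin N → ℂ) : ‖conjV Z‖ = ‖Z‖ := norm_star Z
lemma conjV_conjV {N : ℕ} (Z : Fin N → ℂ) : conjV (conjV Z) = Z := by
  funext i; exact Complex.conj_conj _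
lemma conjV_zero {N : ℕ} : conjV (0 : Fin N → ℂ) = 0 := by funext i; simp [conjV]
lemma conjV_add {N : ℕ} (x y : Fin N → ℂ) : conjV (x + y) = conjV x + conjV y := by
  funext i; simp [conjV]
lemma conjV_isometry {N : ℕ} : Isometry (conjV (N := N)) := by
  refine Isometry.of_dist_eq fun a b => ?_
  rw [dist_eq_norm, dist_eq_norm]
  have : conjV a - conjV b = conjV (a - b) := by funext i; simp [conjV, map_sub]
  rw [this, conjV_norm]
lemma conjV_continuous {N : ℕ} : Continuous (conjV (N := N)) := conjV_isometry.continuous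

/-- conjugation as a real-linear continuous map -/
noncomputable def conjCLM {N : ℕ} : (Fin N → ℂ) →L[ℝ] (Fin N → ℂ) where
  toFun := conjV
  map_add' := conjV_add
  map_smul' := fun r x => by funext i; simp [conjV]
  cont := conjV_continuous

noncomputable def conjCM {m a b : ℕ}
    (p : ContinuousMultilinearMap ℂ (fun _ : Fin m => (Fin a → ℂ)) (Fin b → ℂ)) :
    ContinuousMultilinearMap ℂ (fun _ : Fin m => (Fin a → ℂ)) (Fin b → ℂ) :=
  MultilinearMap.mkContinuous
    { toFun := fun v => conjV (p (fun i => conjV (v i)))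
      map_update_add' := by
        intro _ v i x y
        have h : ∀ z : Fin a → ℂ, (fun j => conjV (Function.update v i z j)) =
            Function.update (fun k => conjV (v k)) i (conjV z) := by
          intro z; funext j
          exact Function.apply_update (fun _ w => conjV w) v i z j
        simp only [h, conjV_add]
        rw [p.map_update_add]
        exact conjV_add _ _
      map_update_smul' := by
        intro _ v i c x
        have h : ∀ z : Fin a → ℂ, (fun j => conjV (Function.update v i z j)) =
            Function.update (fun k => conjV (v k)) i (conjV z) := by
          intro z; funext j
          exact Function.apply_update (fun _ w => conjV w) v i z j
        have hs : conjV (c • x) = (starRingEnd ℂ c) • conjV x := by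
          funext i; simp [conjV]
        simp only [h, hs]
        rw [p.map_update_smul]
        funext j; simp [conjV] }
    ‖p‖ (fun v => by
      simp only [MultilinearMap.coe_mk]
      rw [conjV_norm]
      calc ‖p fun i => conjV (v i)‖ ≤ ‖p‖ * ∏ i, ‖conjV (v i)‖ := p.le_opNorm _
        _ = ‖p‖ * ∏ i, ‖v i‖ := by simp [conjV_norm])

lemma conjCM_norm_le {m a b : ℕ}
    (p : ContinuousMultilinearMap ℂ (fun _ : Fin m => (Fin a → ℂ)) (Fin b → ℂ)) :
    ‖conjCM p‖ ≤ ‖p‖ :=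
  MultilinearMap.mkContinuous_norm_le _ (norm_nonneg p) _

/-- Conjugate of an analytic map is analytic. -/
lemma AnalyticAt.conjV_comp {a b : ℕ} {f : (Fin a → ℂ) → (Fin b → ℂ)} {x : Fin a → ℂ}
    (hf : AnalyticAt ℂ f (conjV x)) :
    AnalyticAt ℂ (fun z => conjV (f (conjV z))) x := by
  obtain ⟨p, r, hp⟩ := hf
  obtain ⟨rn, hrn0, hrnr⟩ := ENNReal.lt_iff_exists_nnreal_btwn.mp
    (show (0:ℝ≥0∞) < r from hp.r_pos)
  have hrad : (rn : ℝ≥0∞) < p.radius := lt_of_lt_of_le hrnr hp.r_le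
  obtain ⟨C, -, hC⟩ := p.norm_mul_pow_le_of_lt_radius hrad
  have hrn0' : 0 < rn := by exact_mod_cast hrn0
  refine ⟨fun m => conjCM (p m), rn, ?_, hrn0, ?_⟩
  · refine FormalMultilinearSeries.le_radius_of_bound _ C fun m => ?_
    calc ‖conjCM (p m)‖ * (rn:ℝ) ^ m ≤ ‖p m‖ * (rn:ℝ) ^ m := by
          gcongr; exact conjCM_norm_le _
      _ ≤ C := hC m
  · intro y hy
    have hy' : conjV y ∈ Metric.eball (0 : Fin a → ℂ) r := by
      have : edist (conjV y) 0 = edist y 0 := by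
        conv_lhs => rw [show (0 : Fin a → ℂ) = conjV 0 by rw [conjV_zero]]
        exact conjV_isometry.edist_eq y 0
      simp only [Metric.mem_eball] at *
      rw [this]; exact lt_trans hy hrnr
    have hs := hp.hasSum hy'
    have hs2 := (conjCLM (N := b)).hasSum hs
    have he : conjV x + conjV y = conjV (x + y) := (conjV_add x y).symm
    rw [he] at hs2
    exact hs2

lemma analytic_ift {E F : Type*} [NormedAddCommGroup E] [NormedSpace ℂ E] [CompleteSpace E]
    [NormedAddCommGroup F] [NormedSpace ℂ F] [CompleteSpace F]
    {f : E → F} {x : E} (hf : AnalyticAt ℂ f x) (i : E ≃L[ℂ] F)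
    (hi : HasFDerivAt f (i : E →L[ℂ] F) x) :
    ∃ Φ : OpenPartialHomeomorph E F, ⇑Φ = f ∧ x ∈ Φ.source ∧ AnalyticAt ℂ Φ.symm (f x) := by
  have hsd : HasStrictFDerivAt f (i : E →L[ℂ] F) x :=
    (hf.contDiffAt (n := 1)).hasStrictFDerivAt' hi one_ne_zero
  set Φ := hsd.toOpenPartialHomeomorph f with hΦdef
  have hcoe : ⇑Φ = f := hsd.toOpenPartialHomeomorph_coe
  have hx : x ∈ Φ.source := hsd.mem_toOpenPartialHomeomorph_source
  have hfa : AnalyticAt ℂ (⇑Φ) x := by rw [hcoe]; exact hf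
  have hder : fderiv ℂ (⇑Φ) x = (i : E →L[ℂ] F) := by rw [hcoe]; exact hi.fderiv
  have := Φ.analyticAt_symm' hx hfa hder
  rw [hcoe] at this
  exact ⟨Φ, hcoe, hx, this⟩


/-- Invariant description of normal coordinates (Theorem 2.1, parts (i),(ii)):
given a defining function `ρ` for a generic submanifold `M` through `0` and a holomorphic
submersion `z̃` with fiber `W = z̃⁻¹(0)` transversal to the Segre variety `Σ₀` at `0`,
there are neighborhoods `V, X, Y`, an involution `ι` of `Y` given by the intersection of
Segre varieties with `W`, and a unique holomorphic submersion `w̃ : V → Y`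
such that `Z ↦ (z̃(Z), w̃(Z))` is a bijection of `V` onto `X × Y` sending
`Σ_p ∩ V` to `X × {ι(p)}` for every `p ∈ Y`. -/
theorem normal_coordinates_invariant {n d : ℕ}
    (ρ : (Fin (n + d) → ℂ) × (Fin (n + d) → ℂ) → Fin d → ℂ)
    (U : Set ((Fin (n + d) → ℂ) × (Fin (n + d) → ℂ))) (hUopen : IsOpen U)
    (hU0 : ((0 : Fin (n + d) → ℂ), (0 : Fin (n + d) → ℂ)) ∈ U)
    (hρ : AnalyticOnNhd ℂ ρ U) (hρ0 : ρ (0, 0) = 0)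
    (hρsurj : Function.Surjective (fderiv ℂ (fun Z : Fin (n + d) → ℂ => ρ (Z, 0)) 0))
    (hreal : ∀ Z ζ : Fin (n + d) → ℂ, (Z, ζ) ∈ U → ρ (Z, ζ) = conjV (ρ (conjV ζ, conjV Z)))
    (ztil : (Fin (n + d) → ℂ) → Fin n → ℂ)
    (U₀ : Set (Fin (n + d) → ℂ)) (hU₀open : IsOpen U₀) (hU₀0 : (0 : Fin (n + d) → ℂ) ∈ U₀)
    (hz : AnalyticOnNhd ℂ ztil U₀) (hz0 : ztil 0 = 0)
    (hzsurj : Function.Surjective (fderiv ℂ ztil 0))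
    (htrans : IsCompl
      (LinearMap.ker ((fderiv ℂ (fun Z : Fin (n + d) → ℂ => ρ (Z, 0)) 0 : (Fin (n + d) → ℂ) →L[ℂ] Fin d → ℂ) :
        (Fin (n + d) → ℂ) →ₗ[ℂ] Fin d → ℂ))
      (LinearMap.ker ((fderiv ℂ ztil 0 : (Fin (n + d) → ℂ) →L[ℂ] Fin n → ℂ) :
        (Fin (n + d) → ℂ) →ₗ[ℂ] Fin n → ℂ))) :
    ∃ (V : Set (Fin (n + d) → ℂ)) (X : Set (Fin n → ℂ)) (Y : Set (Fin (n + d) → ℂ))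
      (ι : (Fin (n + d) → ℂ) → Fin (n + d) → ℂ)
      (wt : (Fin (n + d) → ℂ) → Fin (n + d) → ℂ),
      IsOpen V ∧ (0 : Fin (n + d) → ℂ) ∈ V ∧ V ⊆ U₀ ∧
      IsOpen X ∧ (0 : Fin n → ℂ) ∈ X ∧
      -- `Y` is a relatively open neighborhood of `0` in `W = z̃⁻¹(0)`
      (∃ O : Set (Fin (n + d) → ℂ), IsOpen O ∧ Y = {Z | ztil Z = 0} ∩ O) ∧
      (0 : Fin (n + d) → ℂ) ∈ Y ∧
      (∀ p ∈ Y, ι p ∈ Y) ∧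
      -- (a): `ι(p)` is the unique point of `Y` on `Σ_p`, and `ι` is an involution
      (∀ p ∈ Y, {q | q ∈ Y ∧ ρ (q, conjV p) = 0} = {ι p} ∧ ι (ι p) = p) ∧
      -- `w̃` is holomorphic on `V`, vanishes at `0`, and takes values in `W`
      AnalyticOnNhd ℂ wt V ∧ wt 0 = 0 ∧ (∀ Z ∈ V, ztil (wt Z) = 0) ∧ (∀ Z ∈ V, wt Z ∈ Y) ∧
      -- (b): `Z ↦ (z̃(Z), w̃(Z))` is a bijection of `V` onto `X × Y`
      Set.BijOn (fun Z => (ztil Z, wt Z)) V (X ×ˢ Y) ∧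
      -- (c): `Σ_p ∩ V` is exactly the fiber `{w̃ = ι(p)}`
      (∀ p ∈ Y, {Z | Z ∈ V ∧ ρ (Z, conjV p) = 0} = {Z | Z ∈ V ∧ wt Z = ι p}) ∧
      -- uniqueness of `w̃`
      (∀ (wt' : (Fin (n + d) → ℂ) → Fin (n + d) → ℂ) (V' : Set (Fin (n + d) → ℂ)),
        IsOpen V' → (0 : Fin (n + d) → ℂ) ∈ V' → AnalyticOnNhd ℂ wt' V' →
        (∀ Z ∈ V', ztil (wt' Z) = 0) →
        (∀ p ∈ Y, {Z | Z ∈ V' ∧ ρ (Z, conjV p) = 0} = {Z | Z ∈ V' ∧ wt' Z = ι p}) →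
        wt' =ᶠ[nhds 0] wt) := by
  classical
  set A := fderiv ℂ (fun Z : (Fin (n+d) → ℂ) => ρ (Z, 0)) 0 with hAdef
  set B := fderiv ℂ ztil 0 with hBdef
  set Dρ := fderiv ℂ ρ ((0 : (Fin (n+d) → ℂ)), (0 : (Fin (n+d) → ℂ))) with hDρdef
  have hρ00 : AnalyticAt ℂ ρ ((0:(Fin (n+d) → ℂ)), (0:(Fin (n+d) → ℂ))) := hρ _ hU0
  have hz00 : AnalyticAt ℂ ztil (0:(Fin (n+d) → ℂ)) := hz _ hU₀0
  have hρd : HasFDerivAt ρ Dρ ((0:(Fin (n+d) → ℂ)),(0:(Fin (n+d) → ℂ))) := hρ00.differentiableAt.hasFDerivAt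
  have hzd : HasFDerivAt ztil B 0 := hz00.differentiableAt.hasFDerivAt
  -- the partial derivative in the first slot
  have hArel : ∀ u : (Fin (n+d) → ℂ), A u = Dρ (u, 0) := by
    have hinl : HasFDerivAt (fun Z : (Fin (n+d) → ℂ) => ((Z, (0:(Fin (n+d) → ℂ))) : (Fin (n+d) → ℂ) × (Fin (n+d) → ℂ)))
        (ContinuousLinearMap.inl ℂ (Fin (n+d) → ℂ) (Fin (n+d) → ℂ)) 0 :=
      (ContinuousLinearMap.inl ℂ (Fin (n+d) → ℂ) (Fin (n+d) → ℂ)).hasFDerivAt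
    have hcomp : HasFDerivAt (fun Z : (Fin (n+d) → ℂ) => ρ (Z, 0))
        (Dρ.comp (ContinuousLinearMap.inl ℂ (Fin (n+d) → ℂ) (Fin (n+d) → ℂ))) 0 :=
      HasFDerivAt.comp (0 : (Fin (n+d) → ℂ)) hρd hinl
    intro u
    rw [hAdef, hcomp.fderiv]
    rfl
  -- kernels meet trivially
  have hkerAB : ∀ v : (Fin (n+d) → ℂ), A v = 0 → B v = 0 → v = 0 := by
    intro v hva hvb
    have hv : v ∈ LinearMap.ker (A : (Fin (n+d) → ℂ) →ₗ[ℂ] Fin d → ℂ) ⊓ LinearMap.ker (B : (Fin (n+d) → ℂ) →ₗ[ℂ] Fin n → ℂ) := ⟨hva, hvb⟩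
    rw [htrans.inf_eq_bot] at hv
    simpa using hv
  -- joint surjectivity
  have hABsurj : ∀ (c : (Fin d → ℂ)) (y : (Fin n → ℂ)), ∃ e : (Fin (n+d) → ℂ), A e = c ∧ B e = y := by
    intro c y
    obtain ⟨e₁, he₁⟩ := hρsurj c
    obtain ⟨e₂, he₂⟩ := hzsurj y
    obtain ⟨k₁, m₁, hk₁, hm₁, hsum₁⟩ := Submodule.codisjoint_iff_exists_add_eq.mp htrans.codisjoint e₁
    obtain ⟨k₂, m₂, hk₂, hm₂, hsum₂⟩ := Submodule.codisjoint_iff_exists_add_eq.mp htrans.codisjoint e₂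
    refine ⟨m₁ + k₂, ?_, ?_⟩
    · have h1 : A m₁ = c := by
        have := congrArg (⇑A) hsum₁
        rw [map_add] at this
        rw [(show A k₁ = 0 from LinearMap.mem_ker.mp hk₁), zero_add] at this
        rw [this, he₁]
      rw [map_add, h1, (show A k₂ = 0 from LinearMap.mem_ker.mp hk₂), add_zero]
    · have h2 : B k₂ = y := by
        have := congrArg (⇑B) hsum₂
        rw [map_add] at this
        rw [(show B m₂ = 0 from LinearMap.mem_ker.mp hm₂), add_zero] at this
        rw [this, he₂]
      rw [map_add, h2, (show B m₁ = 0 from LinearMap.mem_ker.mp hm₁), zero_add]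
  -- the model linear map
  set swapL : ((Fin (n+d) → ℂ) × (Fin (n+d) → ℂ)) →L[ℂ] ((Fin (n+d) → ℂ) × (Fin (n+d) → ℂ)) :=
    (ContinuousLinearMap.snd ℂ (Fin (n+d) → ℂ) (Fin (n+d) → ℂ)).prod (ContinuousLinearMap.fst ℂ (Fin (n+d) → ℂ) (Fin (n+d) → ℂ)) with hswapdef
  set M : ((Fin (n+d) → ℂ) × (Fin (n+d) → ℂ)) →L[ℂ] ((Fin (n+d) → ℂ) × ((Fin d → ℂ) × (Fin n → ℂ))) :=
    (ContinuousLinearMap.fst ℂ (Fin (n+d) → ℂ) (Fin (n+d) → ℂ)).prod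
      ((Dρ.comp swapL).prod (B.comp (ContinuousLinearMap.snd ℂ (Fin (n+d) → ℂ) (Fin (n+d) → ℂ)))) with hMdef
  have hMapply : ∀ p : (Fin (n+d) → ℂ) × (Fin (n+d) → ℂ), M p = (p.1, (Dρ (p.2, p.1), B p.2)) := by
    intro p
    simp [hMdef, hswapdef, ContinuousLinearMap.prod_apply]
  have hMbij : Function.Bijective M := by
    constructor
    · rw [injective_iff_map_eq_zero]
      intro p hp
      rw [hMapply] at hp
      have h1 : p.1 = 0 := congrArg Prod.fst hp
      have h2 : Dρ (p.2, p.1) = 0 := congrArg (fun q => q.2.1) hp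
      have h3 : B p.2 = 0 := congrArg (fun q => q.2.2) hp
      rw [h1] at h2
      rw [← hArel] at h2
      have h4 : p.2 = 0 := hkerAB _ h2 h3
      exact Prod.ext h1 h4
    · rintro ⟨w, c, y⟩
      obtain ⟨e, hea, heb⟩ := hABsurj (c - Dρ (0, w)) y
      refine ⟨(w, e), ?_⟩
      rw [hMapply]
      have hde : Dρ (e, w) = A e + Dρ (0, w) := by
        have hsplit : ((e, w) : (Fin (n+d) → ℂ) × (Fin (n+d) → ℂ)) = (e, 0) + (0, w) := by simp
        rw [hsplit, map_add, hArel]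
      rw [hde, hea, heb]
      simp
  set f₂ : (Fin (n+d) → ℂ) × (Fin (n+d) → ℂ) → (Fin (n+d) → ℂ) × ((Fin d → ℂ) × (Fin n → ℂ)) := fun p => (p.1, (ρ (p.2, p.1), ztil p.2)) with hf₂def
  have hf₂a : AnalyticAt ℂ f₂ ((0:(Fin (n+d) → ℂ)),(0:(Fin (n+d) → ℂ))) := by
    have h1 : AnalyticAt ℂ (fun p : (Fin (n+d) → ℂ) × (Fin (n+d) → ℂ) => p.1) ((0:(Fin (n+d) → ℂ)),(0:(Fin (n+d) → ℂ))) := analyticAt_fst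
    have hs : AnalyticAt ℂ (⇑swapL) ((0:(Fin (n+d) → ℂ)),(0:(Fin (n+d) → ℂ))) := swapL.analyticAt _
    have h2' : AnalyticAt ℂ (ρ ∘ ⇑swapL) ((0:(Fin (n+d) → ℂ)),(0:(Fin (n+d) → ℂ))) := AnalyticAt.comp (g := ρ) (f := ⇑swapL) hρ00 hs
    have h2 : AnalyticAt ℂ (fun p : (Fin (n+d) → ℂ) × (Fin (n+d) → ℂ) => ρ (p.2, p.1)) ((0:(Fin (n+d) → ℂ)),(0:(Fin (n+d) → ℂ))) := h2'
    have h3' : AnalyticAt ℂ (ztil ∘ (Prod.snd : (Fin (n+d) → ℂ) × (Fin (n+d) → ℂ) → (Fin (n+d) → ℂ))) ((0:(Fin (n+d) → ℂ)),(0:(Fin (n+d) → ℂ))) :=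
      AnalyticAt.comp (g := ztil) (f := (Prod.snd : (Fin (n+d) → ℂ) × (Fin (n+d) → ℂ) → (Fin (n+d) → ℂ))) hz00 analyticAt_snd
    have h3 : AnalyticAt ℂ (fun p : (Fin (n+d) → ℂ) × (Fin (n+d) → ℂ) => ztil p.2) ((0:(Fin (n+d) → ℂ)),(0:(Fin (n+d) → ℂ))) := h3'
    exact h1.prod (h2.prod h3)
  have hf₂d : HasFDerivAt f₂ M ((0:(Fin (n+d) → ℂ)),(0:(Fin (n+d) → ℂ))) := by
    have h1 : HasFDerivAt (fun p : (Fin (n+d) → ℂ) × (Fin (n+d) → ℂ) => p.1)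
        (ContinuousLinearMap.fst ℂ (Fin (n+d) → ℂ) (Fin (n+d) → ℂ)) ((0:(Fin (n+d) → ℂ)),(0:(Fin (n+d) → ℂ))) :=
      (ContinuousLinearMap.fst ℂ (Fin (n+d) → ℂ) (Fin (n+d) → ℂ)).hasFDerivAt
    have h2 : HasFDerivAt (fun p : (Fin (n+d) → ℂ) × (Fin (n+d) → ℂ) => ρ (p.2, p.1))
        (Dρ.comp swapL) ((0:(Fin (n+d) → ℂ)),(0:(Fin (n+d) → ℂ))) :=
      HasFDerivAt.comp _ hρd swapL.hasFDerivAt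
    have h3 : HasFDerivAt (fun p : (Fin (n+d) → ℂ) × (Fin (n+d) → ℂ) => ztil p.2)
        (B.comp (ContinuousLinearMap.snd ℂ (Fin (n+d) → ℂ) (Fin (n+d) → ℂ))) ((0:(Fin (n+d) → ℂ)),(0:(Fin (n+d) → ℂ))) :=
      HasFDerivAt.comp _ hzd (ContinuousLinearMap.snd ℂ (Fin (n+d) → ℂ) (Fin (n+d) → ℂ)).hasFDerivAt
    exact h1.prodMk (h2.prodMk h3)
  set Mlin : ((Fin (n+d) → ℂ) × (Fin (n+d) → ℂ)) ≃ₗ[ℂ] ((Fin (n+d) → ℂ) × ((Fin d → ℂ) × (Fin n → ℂ))) :=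
    LinearEquiv.ofBijective (M : ((Fin (n+d) → ℂ) × (Fin (n+d) → ℂ)) →ₗ[ℂ] ((Fin (n+d) → ℂ) × ((Fin d → ℂ) × (Fin n → ℂ)))) hMbij with hMlindef
  set i₂ : ((Fin (n+d) → ℂ) × (Fin (n+d) → ℂ)) ≃L[ℂ] ((Fin (n+d) → ℂ) × ((Fin d → ℂ) × (Fin n → ℂ))) := Mlin.toContinuousLinearEquiv with hi₂def
  have hi₂coe : (i₂ : ((Fin (n+d) → ℂ) × (Fin (n+d) → ℂ)) →L[ℂ] ((Fin (n+d) → ℂ) × ((Fin d → ℂ) × (Fin n → ℂ)))) = M := by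
    ext p <;> rfl
  obtain ⟨Φ, hcoe, hsrc, hsymm0⟩ := analytic_ift hf₂a i₂ (by rw [hi₂coe]; exact hf₂d)
  have hf₂00 : f₂ ((0:(Fin (n+d) → ℂ)),(0:(Fin (n+d) → ℂ))) = ((0:(Fin (n+d) → ℂ)), ((0:(Fin d → ℂ)), (0:(Fin n → ℂ)))) := by
    have h1 : f₂ ((0:(Fin (n+d) → ℂ)),(0:(Fin (n+d) → ℂ))) = ((0:(Fin (n+d) → ℂ)), (ρ ((0:(Fin (n+d) → ℂ)), (0:(Fin (n+d) → ℂ))), ztil 0)) := rfl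
    rw [h1, hρ0, hz0]
  rw [hf₂00] at hsymm0
  -- the implicit functions
  set κ : (Fin (n+d) → ℂ) × (Fin n → ℂ) → (Fin (n+d) → ℂ) := fun v => (Φ.symm (v.1, ((0 : (Fin d → ℂ)), v.2))).2 with hκdef
  set τ : (Fin (n+d) → ℂ) → (Fin (n+d) → ℂ) := fun w => κ (w, 0) with hτdef
  set θ : (Fin (n+d) → ℂ) → (Fin (n+d) → ℂ) := fun Z => conjV (τ (conjV Z)) with hθdef
  set ι : (Fin (n+d) → ℂ) → (Fin (n+d) → ℂ) := fun p => τ (conjV p) with hιdef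
  set wt : (Fin (n+d) → ℂ) → (Fin (n+d) → ℂ) := fun Z => τ (θ Z) with hwtdef
  -- uniqueness of implicit solutions
  have hKU : ∀ w q : (Fin (n+d) → ℂ), (w, q) ∈ Φ.source → ρ (q, w) = 0 → κ (w, ztil q) = q := by
    intro w q hsrc' hρq
    have h1 : Φ (w, q) = (w, (ρ (q, w), ztil q)) := congrFun hcoe (w, q)
    have h2 := Φ.left_inv hsrc'
    have h3 : ((w, ((0:(Fin d → ℂ)), ztil q)) : (Fin (n+d) → ℂ) × ((Fin d → ℂ) × (Fin n → ℂ))) = Φ (w, q) := by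
      rw [h1, hρq]
    show (Φ.symm ((w, ((0:(Fin d → ℂ)), ztil q)))).2 = q
    rw [h3, h2]
  have hτ0 : τ 0 = 0 := by
    have := hKU 0 0 hsrc hρ0
    rwa [hz0] at this
  have hθ0 : θ 0 = 0 := by rw [hθdef]; simp only [conjV_zero, hτ0]
  have hwt0 : wt 0 = 0 := by rw [hwtdef]; simp only [hθ0, hτ0]
  -- existence properties of κ
  have htgt : ((0:(Fin (n+d) → ℂ)), ((0:(Fin d → ℂ)), (0:(Fin n → ℂ)))) ∈ Φ.target := by
    have h := Φ.map_source hsrc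
    rwa [congrFun hcoe _, hf₂00] at h
  have hjcont : Continuous (fun v : (Fin (n+d) → ℂ) × (Fin n → ℂ) => ((v.1, ((0 : Fin d → ℂ), v.2)) : (Fin (n+d) → ℂ) × ((Fin d → ℂ) × (Fin n → ℂ)))) := by
    fun_prop
  have hjtend : Filter.Tendsto (fun v : (Fin (n+d) → ℂ) × (Fin n → ℂ) => ((v.1, ((0 : Fin d → ℂ), v.2)) : (Fin (n+d) → ℂ) × ((Fin d → ℂ) × (Fin n → ℂ))))
      (nhds ((0:(Fin (n+d) → ℂ)), (0:(Fin n → ℂ)))) (nhds ((0:(Fin (n+d) → ℂ)), ((0:(Fin d → ℂ)), (0:(Fin n → ℂ))))) := by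
    have := hjcont.continuousAt (x := ((0:(Fin (n+d) → ℂ)), (0:(Fin n → ℂ))))
    simpa [ContinuousAt] using this
  have hK : ∀ᶠ v in nhds ((0:(Fin (n+d) → ℂ)), (0:(Fin n → ℂ))),
      ρ (κ v, v.1) = 0 ∧ ztil (κ v) = v.2 ∧ (v.1, κ v) ∈ Φ.source ∧ AnalyticAt ℂ κ v := by
    have hev1 := hjtend.eventually (Φ.open_target.eventually_mem htgt)
    have hev2 := hjtend.eventually hsymm0.eventually_analyticAt
    filter_upwards [hev1, hev2] with v h1 h2
    have hz' := Φ.map_target h1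
    have hri := Φ.right_inv h1
    rw [congrFun hcoe _] at hri
    have e1 : (Φ.symm (v.1, ((0:(Fin d → ℂ)), v.2))).1 = v.1 := congrArg Prod.fst hri
    have e2 : ρ ((Φ.symm (v.1, ((0:(Fin d → ℂ)), v.2))).2, (Φ.symm (v.1, ((0:(Fin d → ℂ)), v.2))).1) = 0 :=
      congrArg (fun q => q.2.1) hri
    have e3 : ztil (Φ.symm (v.1, ((0:(Fin d → ℂ)), v.2))).2 = v.2 := congrArg (fun q => q.2.2) hri
    have hpair : ((v.1, κ v) : (Fin (n+d) → ℂ) × (Fin (n+d) → ℂ)) = Φ.symm (v.1, ((0:(Fin d → ℂ)), v.2)) := by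
      refine Prod.ext e1.symm rfl
    refine ⟨?_, e3, ?_, ?_⟩
    · show ρ (κ v, v.1) = 0
      rw [e1] at e2
      exact e2
    · rw [hpair]; exact hz'
    · have hj : AnalyticAt ℂ (fun v : (Fin (n+d) → ℂ) × (Fin n → ℂ) => ((v.1, ((0 : Fin d → ℂ), v.2)) : (Fin (n+d) → ℂ) × ((Fin d → ℂ) × (Fin n → ℂ)))) v :=
        analyticAt_fst.prod (analyticAt_const.prod analyticAt_snd)
      have hcompa : AnalyticAt ℂ ((Prod.snd : ((Fin (n+d) → ℂ) × (Fin (n+d) → ℂ)) → (Fin (n+d) → ℂ)) ∘ (⇑Φ.symm ∘ (fun v : (Fin (n+d) → ℂ) × (Fin n → ℂ) => ((v.1, ((0 : Fin d → ℂ), v.2)) : (Fin (n+d) → ℂ) × ((Fin d → ℂ) × (Fin n → ℂ)))))) v :=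
        AnalyticAt.comp analyticAt_snd (AnalyticAt.comp (g := ⇑Φ.symm) (f := (fun v : (Fin (n+d) → ℂ) × (Fin n → ℂ) => ((v.1, ((0 : Fin d → ℂ), v.2)) : (Fin (n+d) → ℂ) × ((Fin d → ℂ) × (Fin n → ℂ))))) h2 hj)
      exact hcompa

  -- existence facts for τ
  have hinltend : Filter.Tendsto (fun w : (Fin (n+d) → ℂ) => ((w, (0:(Fin n → ℂ))) : (Fin (n+d) → ℂ) × (Fin n → ℂ))) (nhds 0) (nhds ((0:(Fin (n+d) → ℂ)), (0:(Fin n → ℂ)))) := by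
    have hcont : Continuous (fun w : (Fin (n+d) → ℂ) => ((w, (0:(Fin n → ℂ))) : (Fin (n+d) → ℂ) × (Fin n → ℂ))) := by fun_prop
    have := hcont.continuousAt (x := (0:(Fin (n+d) → ℂ)))
    simpa [ContinuousAt] using this
  have hT : ∀ᶠ w in nhds (0:(Fin (n+d) → ℂ)), ρ (τ w, w) = 0 ∧ ztil (τ w) = 0 ∧ (w, τ w) ∈ Φ.source ∧ AnalyticAt ℂ τ w := by
    filter_upwards [hinltend.eventually hK] with w hw
    refine ⟨hw.1, hw.2.1, hw.2.2.1, ?_⟩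
    have hj2 : AnalyticAt ℂ (fun w : (Fin (n+d) → ℂ) => ((w, (0:(Fin n → ℂ))) : (Fin (n+d) → ℂ) × (Fin n → ℂ))) w :=
      (analyticAt_id).prod analyticAt_const
    exact AnalyticAt.comp (g := κ) (f := fun w : (Fin (n+d) → ℂ) => ((w, (0:(Fin n → ℂ))) : (Fin (n+d) → ℂ) × (Fin n → ℂ))) hw.2.2.2 hj2
  -- ball helpers
  have hconjball : ∀ {r : ℝ} {Z : (Fin (n+d) → ℂ)}, Z ∈ ball (0:(Fin (n+d) → ℂ)) r → conjV Z ∈ ball (0:(Fin (n+d) → ℂ)) r := by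
    intro r Z hZ
    rw [mem_ball_zero_iff] at hZ ⊢
    rwa [conjV_norm]
  have hpairE : ∀ {r : ℝ} {z w : (Fin (n+d) → ℂ)}, z ∈ ball (0:(Fin (n+d) → ℂ)) r → w ∈ ball (0:(Fin (n+d) → ℂ)) r →
      ((z, w) : (Fin (n+d) → ℂ) × (Fin (n+d) → ℂ)) ∈ ball ((0:(Fin (n+d) → ℂ)),(0:(Fin (n+d) → ℂ))) r := by
    intro r z w hz hw
    rw [mem_ball] at hz hw ⊢
    rw [Prod.dist_eq]
    exact max_lt hz hw
  -- choose ε₀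
  obtain ⟨εa, hεa, hTball⟩ := Metric.eventually_nhds_iff_ball.mp hT
  obtain ⟨εb, hεb, hUball⟩ := Metric.mem_nhds_iff.mp (hUopen.mem_nhds hU0)
  obtain ⟨εc, hεc, hSball⟩ := Metric.mem_nhds_iff.mp (Φ.open_source.mem_nhds hsrc)
  obtain ⟨εd, hεd, hU₀ball⟩ := Metric.mem_nhds_iff.mp (hU₀open.mem_nhds hU₀0)
  set ε₀ := min (min εa εb) (min εc εd) with hε₀def
  have hε₀pos : 0 < ε₀ := lt_min (lt_min hεa hεb) (lt_min hεc hεd)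
  have hε₀a : ε₀ ≤ εa := le_trans (min_le_left _ _) (min_le_left _ _)
  have hε₀b : ε₀ ≤ εb := le_trans (min_le_left _ _) (min_le_right _ _)
  have hε₀c : ε₀ ≤ εc := le_trans (min_le_right _ _) (min_le_left _ _)
  have hε₀d : ε₀ ≤ εd := le_trans (min_le_right _ _) (min_le_right _ _)
  have hTb : ∀ w ∈ ball (0:(Fin (n+d) → ℂ)) ε₀, ρ (τ w, w) = 0 ∧ ztil (τ w) = 0 ∧ (w, τ w) ∈ Φ.source ∧ AnalyticAt ℂ τ w :=
    fun w hw => hTball w (ball_subset_ball hε₀a hw)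
  have hUb : ∀ {z w : (Fin (n+d) → ℂ)}, z ∈ ball (0:(Fin (n+d) → ℂ)) ε₀ → w ∈ ball (0:(Fin (n+d) → ℂ)) ε₀ → ((z, w) : (Fin (n+d) → ℂ) × (Fin (n+d) → ℂ)) ∈ U :=
    fun hz hw => hUball (ball_subset_ball hε₀b (hpairE hz hw))
  have hSb : ∀ {z w : (Fin (n+d) → ℂ)}, z ∈ ball (0:(Fin (n+d) → ℂ)) ε₀ → w ∈ ball (0:(Fin (n+d) → ℂ)) ε₀ → ((z, w) : (Fin (n+d) → ℂ) × (Fin (n+d) → ℂ)) ∈ Φ.source :=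
    fun hz hw => hSball (ball_subset_ball hε₀c (hpairE hz hw))
  have hU₀b : ball (0:(Fin (n+d) → ℂ)) ε₀ ⊆ U₀ := fun z hz => hU₀ball (ball_subset_ball hε₀d hz)
  -- θ facts on ball ε₀
  have hθana : ∀ Z ∈ ball (0:(Fin (n+d) → ℂ)) ε₀, AnalyticAt ℂ θ Z := by
    intro Z hZ
    exact ((hTb _ (hconjball hZ)).2.2.2).conjV_comp
  have hθτ : ∀ Z : (Fin (n+d) → ℂ), conjV (θ Z) = τ (conjV Z) := by
    intro Z
    rw [hθdef]
    simp only
    rw [conjV_conjV]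
  have hθW : ∀ Z ∈ ball (0:(Fin (n+d) → ℂ)) ε₀, ztil (conjV (θ Z)) = 0 := by
    intro Z hZ
    rw [hθτ]
    exact (hTb _ (hconjball hZ)).2.1
  have hρθ : ∀ Z ∈ ball (0:(Fin (n+d) → ℂ)) ε₀, ((Z, θ Z) : (Fin (n+d) → ℂ) × (Fin (n+d) → ℂ)) ∈ U → ρ (Z, θ Z) = 0 := by
    intro Z hZ hU'
    rw [hreal _ _ hU', hθτ, (hTb _ (hconjball hZ)).1, conjV_zero]
  -- uniqueness of the implicit function θ
  have hTHU : ∀ Z q : (Fin (n+d) → ℂ), ((conjV Z, q) : (Fin (n+d) → ℂ) × (Fin (n+d) → ℂ)) ∈ Φ.source → ((Z, conjV q) : (Fin (n+d) → ℂ) × (Fin (n+d) → ℂ)) ∈ U →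
      ρ (Z, conjV q) = 0 → ztil q = 0 → conjV q = θ Z := by
    intro Z q hsrc' hU' hρ' hz'
    have h1 : ρ (q, conjV Z) = 0 := by
      have h := hreal _ _ hU'
      rw [hρ', conjV_conjV] at h
      have h2 := congrArg conjV h.symm
      rwa [conjV_conjV, conjV_zero] at h2
    have h2 := hKU _ _ hsrc' h1
    rw [hz'] at h2
    rw [hθdef]
    simp only
    rw [show κ ((conjV Z, (0:(Fin n → ℂ))) : (Fin (n+d) → ℂ) × (Fin n → ℂ)) = τ (conjV Z) from rfl] at h2
    rw [h2]
  -- choose ε₁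
  have hθc : Filter.Tendsto θ (nhds (0:(Fin (n+d) → ℂ))) (nhds (0:(Fin (n+d) → ℂ))) := by
    have h := (hθana 0 (mem_ball_self hε₀pos)).continuousAt
    rwa [ContinuousAt, hθ0] at h
  have hevθ : ∀ᶠ Z in nhds (0:(Fin (n+d) → ℂ)), θ Z ∈ ball (0:(Fin (n+d) → ℂ)) ε₀ ∧ ((Z, θ Z) : (Fin (n+d) → ℂ) × (Fin (n+d) → ℂ)) ∈ U := by
    have h1 : ∀ᶠ Z in nhds (0:(Fin (n+d) → ℂ)), θ Z ∈ ball (0:(Fin (n+d) → ℂ)) ε₀ :=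
      hθc.eventually (isOpen_ball.eventually_mem (mem_ball_self hε₀pos))
    have ht : Filter.Tendsto (fun Z : (Fin (n+d) → ℂ) => ((Z, θ Z) : (Fin (n+d) → ℂ) × (Fin (n+d) → ℂ))) (nhds 0) (nhds ((0:(Fin (n+d) → ℂ)), (0:(Fin (n+d) → ℂ)))) :=
      Filter.Tendsto.prodMk_nhds tendsto_id hθc
    have h2 : ∀ᶠ Z in nhds (0:(Fin (n+d) → ℂ)), ((Z, θ Z) : (Fin (n+d) → ℂ) × (Fin (n+d) → ℂ)) ∈ U := ht.eventually (hUopen.eventually_mem hU0)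
    exact h1.and h2
  obtain ⟨εe, hεe, hθball⟩ := Metric.eventually_nhds_iff_ball.mp hevθ
  set ε₁ := min εe ε₀ with hε₁def
  have hε₁pos : 0 < ε₁ := lt_min hεe hε₀pos
  have hε₁e : ε₁ ≤ εe := min_le_left _ _
  have hε₁0 : ε₁ ≤ ε₀ := min_le_right _ _
  have hθb : ∀ Z ∈ ball (0:(Fin (n+d) → ℂ)) ε₁, θ Z ∈ ball (0:(Fin (n+d) → ℂ)) ε₀ ∧ ((Z, θ Z) : (Fin (n+d) → ℂ) × (Fin (n+d) → ℂ)) ∈ U :=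
    fun Z hZ => hθball Z (ball_subset_ball hε₁e hZ)
  have hwtana : ∀ Z ∈ ball (0:(Fin (n+d) → ℂ)) ε₁, AnalyticAt ℂ wt Z := by
    intro Z hZ
    have h1 : AnalyticAt ℂ τ (θ Z) := (hTb _ (hθb Z hZ).1).2.2.2
    have h2 : AnalyticAt ℂ θ Z := hθana _ (ball_subset_ball hε₁0 hZ)
    exact AnalyticAt.comp (g := τ) (f := θ) h1 h2
  have hρθ1 : ∀ Z ∈ ball (0:(Fin (n+d) → ℂ)) ε₁, ρ (Z, θ Z) = 0 :=
    fun Z hZ => hρθ _ (ball_subset_ball hε₁0 hZ) (hθb Z hZ).2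
  have hztilwt : ∀ Z ∈ ball (0:(Fin (n+d) → ℂ)) ε₁, ztil (wt Z) = 0 :=
    fun Z hZ => (hTb _ (hθb Z hZ).1).2.1
  -- choose δ₂
  have hκc : Filter.Tendsto κ (nhds ((0:(Fin (n+d) → ℂ)),(0:(Fin n → ℂ)))) (nhds (0:(Fin (n+d) → ℂ))) := by
    have h := (hK.self_of_nhds).2.2.2.continuousAt
    rwa [ContinuousAt, show κ ((0:(Fin (n+d) → ℂ)),(0:(Fin n → ℂ))) = 0 from hτ0] at h
  have hevκ : ∀ᶠ v in nhds ((0:(Fin (n+d) → ℂ)),(0:(Fin n → ℂ))),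
      (ρ (κ v, v.1) = 0 ∧ ztil (κ v) = v.2 ∧ (v.1, κ v) ∈ Φ.source ∧ AnalyticAt ℂ κ v) ∧
        κ v ∈ ball (0:(Fin (n+d) → ℂ)) ε₁ :=
    hK.and (hκc.eventually (isOpen_ball.eventually_mem (mem_ball_self hε₁pos)))
  obtain ⟨εf, hεf, hκball⟩ := Metric.eventually_nhds_iff_ball.mp hevκ
  set δ₂ := min εf ε₁ with hδ₂def
  have hδ₂pos : 0 < δ₂ := lt_min hεf hε₁pos
  have hδ₂f : δ₂ ≤ εf := min_le_left _ _
  have hδ₂1 : δ₂ ≤ ε₁ := min_le_right _ _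
  have hδ₂0 : δ₂ ≤ ε₀ := le_trans hδ₂1 hε₁0
  have hpairEF : ∀ {z : (Fin (n+d) → ℂ)} {x : (Fin n → ℂ)}, z ∈ ball (0:(Fin (n+d) → ℂ)) δ₂ → x ∈ ball (0:(Fin n → ℂ)) δ₂ →
      ((z, x) : (Fin (n+d) → ℂ) × (Fin n → ℂ)) ∈ ball ((0:(Fin (n+d) → ℂ)),(0:(Fin n → ℂ))) εf := by
    intro z x hz hx
    rw [mem_ball] at hz hx ⊢
    rw [Prod.dist_eq]
    exact max_lt (lt_of_lt_of_le hz hδ₂f) (lt_of_lt_of_le hx hδ₂f)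

  have hκb : ∀ {z : (Fin (n+d) → ℂ)} {x : (Fin n → ℂ)}, z ∈ ball (0:(Fin (n+d) → ℂ)) δ₂ → x ∈ ball (0:(Fin n → ℂ)) δ₂ →
      ρ (κ (z,x), z) = 0 ∧ ztil (κ (z,x)) = x ∧ ((z, κ (z,x)) : (Fin (n+d) → ℂ) × (Fin (n+d) → ℂ)) ∈ Φ.source ∧
        κ (z,x) ∈ ball (0:(Fin (n+d) → ℂ)) ε₁ := by
    intro z x hz hx
    have h := hκball _ (hpairEF hz hx)
    exact ⟨h.1.1, h.1.2.1, h.1.2.2.1, h.2⟩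
  set O : Set (Fin (n+d) → ℂ) := ball (0:(Fin (n+d) → ℂ)) δ₂ ∩ ι ⁻¹' (ball (0:(Fin (n+d) → ℂ)) δ₂) with hOdef
  have hOopen : IsOpen O := by
    have hcont : ContinuousOn ι (ball (0:(Fin (n+d) → ℂ)) δ₂) := by
      intro p hp
      have h1 : AnalyticAt ℂ τ (conjV p) := (hTb _ (hconjball (ball_subset_ball hδ₂0 hp))).2.2.2
      have h2 : ContinuousAt (fun p : (Fin (n+d) → ℂ) => τ (conjV p)) p :=
        ContinuousAt.comp (g := τ) (f := conjV) h1.continuousAt conjV_continuous.continuousAt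
      exact h2.continuousWithinAt
    exact hcont.isOpen_inter_preimage isOpen_ball isOpen_ball
  set X : Set (Fin n → ℂ) := ball (0:(Fin n → ℂ)) δ₂ with hXdef
  set Y : Set (Fin (n+d) → ℂ) := {Z : (Fin (n+d) → ℂ) | ztil Z = 0} ∩ O with hYdef
  have hYm : ∀ p ∈ Y, ztil p = 0 ∧ p ∈ ball (0:(Fin (n+d) → ℂ)) δ₂ ∧ ι p ∈ ball (0:(Fin (n+d) → ℂ)) δ₂ :=
    fun p hp => ⟨hp.1, hp.2.1, hp.2.2⟩
  have h0O : (0:(Fin (n+d) → ℂ)) ∈ O := by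
    refine ⟨mem_ball_self hδ₂pos, ?_⟩
    show ι 0 ∈ ball (0:(Fin (n+d) → ℂ)) δ₂
    have hι0 : ι (0:(Fin (n+d) → ℂ)) = 0 := by
      rw [hιdef]
      simp only
      rw [conjV_zero]
      exact hτ0
    rw [hι0]
    exact mem_ball_self hδ₂pos
  have h0Y : (0:(Fin (n+d) → ℂ)) ∈ Y := ⟨hz0, h0O⟩
  have hιW : ∀ p ∈ ball (0:(Fin (n+d) → ℂ)) ε₀, ztil (ι p) = 0 ∧ ρ (ι p, conjV p) = 0 := by
    intro p hp
    have h := hTb _ (hconjball hp)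
    exact ⟨h.2.1, h.1⟩
  have hinv : ∀ p : (Fin (n+d) → ℂ), ztil p = 0 → p ∈ ball (0:(Fin (n+d) → ℂ)) δ₂ → ι p ∈ ball (0:(Fin (n+d) → ℂ)) δ₂ → ι (ι p) = p := by
    intro p hzp hp hq
    have hpe : p ∈ ball (0:(Fin (n+d) → ℂ)) ε₀ := ball_subset_ball hδ₂0 hp
    have hqe : ι p ∈ ball (0:(Fin (n+d) → ℂ)) ε₀ := ball_subset_ball hδ₂0 hq
    have h1 : ρ (ι p, conjV p) = 0 := (hιW p hpe).2
    have hρpq : ρ (p, conjV (ι p)) = 0 := by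
      have hU' : ((p, conjV (ι p)) : (Fin (n+d) → ℂ) × (Fin (n+d) → ℂ)) ∈ U := hUb hpe (hconjball hqe)
      rw [hreal _ _ hU', conjV_conjV, h1, conjV_zero]
    have hsrc' : ((conjV (ι p), p) : (Fin (n+d) → ℂ) × (Fin (n+d) → ℂ)) ∈ Φ.source := hSb (hconjball hqe) hpe
    have h2 := hKU _ _ hsrc' hρpq
    rw [hzp] at h2
    exact h2
  have hιY : ∀ p ∈ Y, ι p ∈ Y := by
    intro p hp
    obtain ⟨hzp, hpb, hιpb⟩ := hYm p hp
    refine ⟨(hιW p (ball_subset_ball hδ₂0 hpb)).1, hιpb, ?_⟩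
    show ι (ι p) ∈ ball (0:(Fin (n+d) → ℂ)) δ₂
    rw [hinv p hzp hpb hιpb]
    exact hpb
  set V : Set (Fin (n+d) → ℂ) := ball (0:(Fin (n+d) → ℂ)) ε₁ ∩
      ((fun Z : (Fin (n+d) → ℂ) => ((ztil Z, (wt Z, conjV (θ Z))) : (Fin n → ℂ) × ((Fin (n+d) → ℂ) × (Fin (n+d) → ℂ)))) ⁻¹' (X ×ˢ (O ×ˢ O))) with hVdef
  have hVm : ∀ Z : (Fin (n+d) → ℂ), Z ∈ V ↔ (Z ∈ ball (0:(Fin (n+d) → ℂ)) ε₁ ∧ ztil Z ∈ X ∧ wt Z ∈ O ∧ conjV (θ Z) ∈ O) := by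
    intro Z
    constructor
    · rintro ⟨h1, h2⟩
      exact ⟨h1, h2.1, h2.2.1, h2.2.2⟩
    · rintro ⟨h1, h2, h3, h4⟩
      exact ⟨h1, h2, h3, h4⟩
  have hVopen : IsOpen V := by
    have hgc : ContinuousOn (fun Z : (Fin (n+d) → ℂ) => ((ztil Z, (wt Z, conjV (θ Z))) : (Fin n → ℂ) × ((Fin (n+d) → ℂ) × (Fin (n+d) → ℂ)))) (ball (0:(Fin (n+d) → ℂ)) ε₁) := by
      intro Z hZ
      have c1 : ContinuousAt ztil Z := (hz _ (hU₀b (ball_subset_ball hε₁0 hZ))).continuousAt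
      have c2 : ContinuousAt wt Z := (hwtana _ hZ).continuousAt
      have c3 : ContinuousAt (fun Z : (Fin (n+d) → ℂ) => conjV (θ Z)) Z :=
        ContinuousAt.comp (g := conjV) (f := θ) conjV_continuous.continuousAt
          (hθana _ (ball_subset_ball hε₁0 hZ)).continuousAt
      exact (c1.prodMk (c2.prodMk c3)).continuousWithinAt
    exact hgc.isOpen_inter_preimage isOpen_ball (isOpen_ball.prod (hOopen.prod hOopen))
  have h0V : (0:(Fin (n+d) → ℂ)) ∈ V := by
    rw [hVm]
    refine ⟨mem_ball_self hε₁pos, ?_, ?_, ?_⟩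
    · rw [hz0]; exact mem_ball_self hδ₂pos
    · rw [hwt0]; exact h0O
    · rw [hθ0, conjV_zero]; exact h0O
  have hqY : ∀ Z ∈ V, conjV (θ Z) ∈ Y := by
    intro Z hZ
    rw [hVm] at hZ
    exact ⟨hθW _ (ball_subset_ball hε₁0 hZ.1), hZ.2.2.2⟩
  have hwtι : ∀ Z : (Fin (n+d) → ℂ), wt Z = ι (conjV (θ Z)) := by
    intro Z
    rw [hwtdef, hιdef]
    simp only
    rw [conjV_conjV]
  have hkey : ∀ Z ∈ V, ∀ p ∈ Y, (ρ (Z, conjV p) = 0 ↔ θ Z = conjV p) := by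
    intro Z hZ p hp
    rw [hVm] at hZ
    obtain ⟨hzp, hpb, hιpb⟩ := hYm p hp
    have hZ0 : Z ∈ ball (0:(Fin (n+d) → ℂ)) ε₀ := ball_subset_ball hε₁0 hZ.1
    have hp0 : p ∈ ball (0:(Fin (n+d) → ℂ)) ε₀ := ball_subset_ball hδ₂0 hpb
    constructor
    · intro hρ'
      exact (hTHU Z p (hSb (hconjball hZ0) hp0) (hUb hZ0 (hconjball hp0)) hρ' hzp).symm
    · intro hθ'
      rw [← hθ']
      exact hρθ1 _ hZ.1
  have hinvY : ∀ p ∈ Y, ι (ι p) = p := by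
    intro p hp
    obtain ⟨hzp, hpb, hιpb⟩ := hYm p hp
    exact hinv p hzp hpb hιpb
  have ha : ∀ p ∈ Y, {q | q ∈ Y ∧ ρ (q, conjV p) = 0} = {ι p} ∧ ι (ι p) = p := by
    intro p hp
    obtain ⟨hzp, hpb, hιpb⟩ := hYm p hp
    refine ⟨?_, hinvY p hp⟩
    apply Set.eq_singleton_iff_unique_mem.mpr
    constructor
    · exact ⟨hιY p hp, (hιW p (ball_subset_ball hδ₂0 hpb)).2⟩
    · rintro q ⟨hqY', hρq⟩
      obtain ⟨hzq, hqb, hιqb⟩ := hYm q hqY'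
      have hsrc' : ((conjV p, q) : (Fin (n+d) → ℂ) × (Fin (n+d) → ℂ)) ∈ Φ.source :=
        hSb (hconjball (ball_subset_ball hδ₂0 hpb)) (ball_subset_ball hδ₂0 hqb)
      have h2 := hKU _ _ hsrc' hρq
      rw [hzq] at h2
      exact h2.symm
  have hwtV : ∀ Z ∈ V, wt Z ∈ Y := by
    intro Z hZ
    have h := (hVm Z).mp hZ
    exact ⟨hztilwt _ h.1, h.2.2.1⟩
  have hc : ∀ p ∈ Y, {Z | Z ∈ V ∧ ρ (Z, conjV p) = 0} = {Z | Z ∈ V ∧ wt Z = ι p} := by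
    intro p hp
    ext Z
    simp only [Set.mem_setOf_eq]
    constructor
    · rintro ⟨hZV, hρ'⟩
      refine ⟨hZV, ?_⟩
      have hθ' := (hkey Z hZV p hp).mp hρ'
      rw [hwtι Z, hθ', conjV_conjV]
    · rintro ⟨hZV, hwt'⟩
      refine ⟨hZV, ?_⟩
      have hq := hqY Z hZV
      have hqp : conjV (θ Z) = p := by
        have h1 : ι (conjV (θ Z)) = ι p := by rw [← hwtι Z]; exact hwt'
        have h2 := congrArg ι h1
        rw [hinvY _ hq, hinvY _ hp] at h2
        exact h2
      apply (hkey Z hZV p hp).mpr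
      rw [← hqp, conjV_conjV]
  have hmaps : Set.MapsTo (fun Z => ((ztil Z, wt Z) : (Fin n → ℂ) × (Fin (n+d) → ℂ))) V (X ×ˢ Y) := by
    intro Z hZ
    have h := (hVm Z).mp hZ
    exact ⟨h.2.1, hwtV Z hZ⟩
  have hinj : Set.InjOn (fun Z => ((ztil Z, wt Z) : (Fin n → ℂ) × (Fin (n+d) → ℂ))) V := by
    intro Z₁ hZ₁ Z₂ hZ₂ heq
    have hz12 : ztil Z₁ = ztil Z₂ := congrArg (fun q : (Fin n → ℂ) × (Fin (n+d) → ℂ) => q.1) heq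
    have hw12 : wt Z₁ = wt Z₂ := congrArg (fun q : (Fin n → ℂ) × (Fin (n+d) → ℂ) => q.2) heq
    have hq1 := hqY Z₁ hZ₁
    have hq2 := hqY Z₂ hZ₂
    have hθ12 : θ Z₁ = θ Z₂ := by
      have h1 : ι (conjV (θ Z₁)) = ι (conjV (θ Z₂)) := by rw [← hwtι, ← hwtι]; exact hw12
      have h2 := congrArg ι h1
      rw [hinvY _ hq1, hinvY _ hq2] at h2
      have h3 := congrArg conjV h2
      rwa [conjV_conjV, conjV_conjV] at h3
    have hb1 := (hVm Z₁).mp hZ₁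
    have hb2 := (hVm Z₂).mp hZ₂
    have hs1 : ((θ Z₁, Z₁) : (Fin (n+d) → ℂ) × (Fin (n+d) → ℂ)) ∈ Φ.source :=
      hSb (hθb _ hb1.1).1 (ball_subset_ball hε₁0 hb1.1)
    have hs2 : ((θ Z₂, Z₂) : (Fin (n+d) → ℂ) × (Fin (n+d) → ℂ)) ∈ Φ.source :=
      hSb (hθb _ hb2.1).1 (ball_subset_ball hε₁0 hb2.1)
    have k1 := hKU _ _ hs1 (hρθ1 _ hb1.1)
    have k2 := hKU _ _ hs2 (hρθ1 _ hb2.1)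
    rw [← k1, ← k2, hθ12, hz12]
  have hsurj : Set.SurjOn (fun Z => ((ztil Z, wt Z) : (Fin n → ℂ) × (Fin (n+d) → ℂ))) V (X ×ˢ Y) := by
    rintro ⟨x, p⟩ ⟨hx', hp'⟩
    have hx : x ∈ ball (0:(Fin n → ℂ)) δ₂ := hx'
    have hp : p ∈ Y := hp'
    obtain ⟨hzp, hpb, hιpb⟩ := hYm p hp
    have hιpY := hιY p hp
    obtain ⟨hzιp, hιpb', hιιpb⟩ := hYm _ hιpY
    have hκf := hκb (hconjball hιpb) hx
    have hZball : κ ((conjV (ι p), x) : (Fin (n+d) → ℂ) × (Fin n → ℂ)) ∈ ball (0:(Fin (n+d) → ℂ)) ε₁ := hκf.2.2.2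
    have hZ0 : κ ((conjV (ι p), x) : (Fin (n+d) → ℂ) × (Fin n → ℂ)) ∈ ball (0:(Fin (n+d) → ℂ)) ε₀ := ball_subset_ball hε₁0 hZball
    have hιp0 : ι p ∈ ball (0:(Fin (n+d) → ℂ)) ε₀ := ball_subset_ball hδ₂0 hιpb
    have hρZ : ρ (κ ((conjV (ι p), x) : (Fin (n+d) → ℂ) × (Fin n → ℂ)), conjV (ι p)) = 0 := hκf.1
    have hθZ : θ (κ ((conjV (ι p), x) : (Fin (n+d) → ℂ) × (Fin n → ℂ))) = conjV (ι p) :=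
      (hTHU _ (ι p) (hSb (hconjball hZ0) hιp0) (hUb hZ0 (hconjball hιp0)) hρZ hzιp).symm
    have hwtZ : wt (κ ((conjV (ι p), x) : (Fin (n+d) → ℂ) × (Fin n → ℂ))) = p := by
      rw [hwtι, hθZ, conjV_conjV]
      exact hinvY p hp
    have hZV : κ ((conjV (ι p), x) : (Fin (n+d) → ℂ) × (Fin n → ℂ)) ∈ V := by
      rw [hVm]
      refine ⟨hZball, ?_, ?_, ?_⟩
      · rw [hκf.2.1]; exact hx
      · rw [hwtZ]; exact hp.2
      · rw [hθZ, conjV_conjV]; exact hιpY.2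
    exact ⟨κ ((conjV (ι p), x) : (Fin (n+d) → ℂ) × (Fin n → ℂ)), hZV, Prod.ext hκf.2.1 hwtZ⟩
  have huniq : ∀ (wt' : (Fin (n+d) → ℂ) → (Fin (n+d) → ℂ)) (V' : Set (Fin (n+d) → ℂ)),
      IsOpen V' → (0:(Fin (n+d) → ℂ)) ∈ V' → AnalyticOnNhd ℂ wt' V' →
      (∀ Z ∈ V', ztil (wt' Z) = 0) →
      (∀ p ∈ Y, {Z | Z ∈ V' ∧ ρ (Z, conjV p) = 0} = {Z | Z ∈ V' ∧ wt' Z = ι p}) →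
      wt' =ᶠ[nhds 0] wt := by
    intro wt' V' hV'open h0V' _ _ hc'
    have hmem : V' ∩ V ∈ nhds (0:(Fin (n+d) → ℂ)) := (hV'open.inter hVopen).mem_nhds ⟨h0V', h0V⟩
    refine Filter.eventuallyEq_of_mem hmem ?_
    intro Z hZ
    obtain ⟨hZV', hZV⟩ := hZ
    have hpY := hqY Z hZV
    have hρ' : ρ (Z, conjV (conjV (θ Z))) = 0 := by
      rw [conjV_conjV]
      exact hρθ1 _ ((hVm Z).mp hZV).1
    have hmem2 : Z ∈ {Z' | Z' ∈ V' ∧ ρ (Z', conjV (conjV (θ Z))) = 0} := ⟨hZV', hρ'⟩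
    rw [hc' _ hpY] at hmem2
    have h5 := hmem2.2
    show wt' Z = wt Z
    rw [h5, hwtι Z]
  refine ⟨V, X, Y, ι, wt, hVopen, h0V, ?_, isOpen_ball, mem_ball_self hδ₂pos,
    ⟨O, hOopen, hYdef⟩, h0Y, hιY, ha, ?_, hwt0, ?_, hwtV, ⟨hmaps, hinj, hsurj⟩, hc, huniq⟩
  · intro Z hZ
    exact hU₀b (ball_subset_ball hε₁0 ((hVm Z).mp hZ).1)
  · intro Z hZ
    exact hwtana _ ((hVm Z).mp hZ).1
  · intro Z hZ
    exact hztilwt _ ((hVm Z).mp hZ).1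
end

section
/- Let Q(z, χ, τ) be a ℂ-valued holomorphic function near 0 ∈ ℂ³ with Q(z, 0, τ) ≡ Q(0, χ, τ) ≡ τ, set Q̄(χ, z, τ) := conj(Q(conj χ, conj z, conj τ)), and assume the reality identity Q(z, χ, Q̄(χ, z, w)) ≡ w near 0. Define U(η¹, η², z, σ) := Q(z, η¹ − σ, Q̄(η¹ − σ, η², Q(η², η¹ + σ, 0))) for (η¹, η², z, σ) near 0 ∈ ℂ⁴, and Δ(η¹, η²) := (∂U/∂σ)(η¹, η², 0, 0). Then: (a) U(η¹, η², 0, 0) = 0 for all (η¹, η²) near 0; (b) Δ(η¹, η²) = 2 · Q̄_w(η¹, η², Q(η², η¹, 0)) · Q_χ(η², η¹, 0), where Q_χ denotes the partial derivative of Q in its second argument and Q̄_w the partial derivative of Q̄ in its third argument; (c) if Q_χ(z, χ, 0) does not vanish identically near 0 (equivalently, M is of finite type at 0), then Δ does not vanish identically near 0. -/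
open Filter Complex

/-- The conjugate function `Q̄(χ,z,τ) := conj (Q (conj χ, conj z, conj τ))`. -/
noncomputable def conjQ (Q : ℂ × ℂ × ℂ → ℂ) : ℂ × ℂ × ℂ → ℂ :=
  fun p => (starRingEnd ℂ) (Q ((starRingEnd ℂ) p.1, (starRingEnd ℂ) p.2.1, (starRingEnd ℂ) p.2.2))

/-- `U(η¹,η²,z,σ) := Q(z, η¹−σ, Q̄(η¹−σ, η², Q(η², η¹+σ, 0)))`. -/
noncomputable def Ufn (Q : ℂ × ℂ × ℂ → ℂ) (η1 η2 z σ : ℂ) : ℂ :=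
  Q (z, η1 - σ, conjQ Q (η1 - σ, η2, Q (η2, η1 + σ, 0)))

/-- `Δ(η¹,η²) := (∂U/∂σ)(η¹,η²,0,0)`. -/
noncomputable def Δfn (Q : ℂ × ℂ × ℂ → ℂ) (η1 η2 : ℂ) : ℂ :=
  deriv (Ufn Q η1 η2 0) 0

lemma norm_conj' (w : ℂ) : ‖(starRingEnd ℂ) w‖ = ‖w‖ := by
  rw [starRingEnd_apply]; exact norm_star w

/-- If `f` has derivative `d` at `conj x`, then `z ↦ conj (f (conj z))` has
derivative `conj d` at `x`. -/
lemma conj_hasDerivAt {f : ℂ → ℂ} {d x : ℂ}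
    (h : HasDerivAt f d ((starRingEnd ℂ) x)) :
    HasDerivAt (fun z => (starRingEnd ℂ) (f ((starRingEnd ℂ) z))) ((starRingEnd ℂ) d) x := by
  rw [hasDerivAt_iff_tendsto] at h ⊢
  have hc : Filter.Tendsto (fun z : ℂ => (starRingEnd ℂ) z) (nhds x)
      (nhds ((starRingEnd ℂ) x)) := (continuous_conj.tendsto x)
  have := h.comp hc
  refine this.congr (fun z => ?_)
  simp only [Function.comp]
  congr 1
  · rw [← map_sub, norm_conj']
  · rw [show f ((starRingEnd ℂ) z) - f ((starRingEnd ℂ) x) - ((starRingEnd ℂ) z - (starRingEnd ℂ) x) • d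
        = (starRingEnd ℂ) ((starRingEnd ℂ) (f ((starRingEnd ℂ) z)) - (starRingEnd ℂ) (f ((starRingEnd ℂ) x)) - (z - x) • (starRingEnd ℂ) d) by
      simp [smul_eq_mul, map_sub, map_mul], norm_conj']

/-- Properties of `U` and `Δ` for a hypersurface `M ⊂ ℂ²` in normal coordinates:
(a) `U(η,0,0) ≡ 0`; (b) `Δ(η) = 2 Q̄_w(η¹,η²,Q(η²,η¹,0)) Q_χ(η²,η¹,0)`;
(c) if `M` is of finite type at `0` (i.e. `Q_χ(z,χ,0) ≢ 0`), then `Δ ≢ 0` near `0`. -/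
theorem Ufn_Delta_props (Q : ℂ × ℂ × ℂ → ℂ)
    (U : Set (ℂ × ℂ × ℂ)) (hUopen : IsOpen U) (hU0 : ((0 : ℂ), (0 : ℂ), (0 : ℂ)) ∈ U)
    (hQ : AnalyticOnNhd ℂ Q U)
    (hnorm1 : ∀ z τ : ℂ, (z, (0 : ℂ), τ) ∈ U → Q (z, 0, τ) = τ)
    (hnorm2 : ∀ χ τ : ℂ, ((0 : ℂ), χ, τ) ∈ U → Q (0, χ, τ) = τ)
    (hreal : ∀ᶠ p : ℂ × ℂ × ℂ in nhds 0,
      Q (p.1, p.2.1, conjQ Q (p.2.1, p.1, p.2.2)) = p.2.2) :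
    (∀ᶠ η : ℂ × ℂ in nhds 0, Ufn Q η.1 η.2 0 0 = 0) ∧
    (∀ᶠ η : ℂ × ℂ in nhds 0,
      Δfn Q η.1 η.2 =
        2 * deriv (fun τ => conjQ Q (η.1, η.2, τ)) (Q (η.2, η.1, 0)) *
          deriv (fun χ => Q (η.2, χ, 0)) η.1) ∧
    ((¬ ∀ᶠ p : ℂ × ℂ in nhds 0, deriv (fun χ => Q (p.1, χ, 0)) p.2 = 0) →
      ¬ ∀ᶠ η : ℂ × ℂ in nhds 0, Δfn Q η.1 η.2 = 0) := by
  classical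
  obtain ⟨V, hV, hVopen, hV0⟩ := eventually_nhds_iff.mp hreal
  have hQ000 : Q (0, 0, 0) = 0 := hnorm1 0 0 hU0
  have hQ0' : Q 0 = 0 := hQ000
  -- continuity of `η ↦ Q (η.2, η.1, 0)` at `0`
  have hQc0 : ContinuousAt (fun η : ℂ × ℂ => Q (η.2, η.1, 0)) 0 := by
    have h1 : ContinuousAt (fun η : ℂ × ℂ => ((η.2, η.1, (0:ℂ)) : ℂ × ℂ × ℂ)) 0 :=
      (continuous_snd.prodMk (continuous_fst.prodMk continuous_const)).continuousAt
    have h2 := ContinuousAt.comp (f := fun η : ℂ × ℂ => ((η.2, η.1, (0:ℂ)) : ℂ × ℂ × ℂ))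
      (x := 0) ((hQ _ hU0).continuousAt) h1
    exact h2
  -- eventual membership facts
  have hE1 : ∀ᶠ η : ℂ × ℂ in nhds 0, ((η.2, η.1, (0:ℂ)) : ℂ × ℂ × ℂ) ∈ U := by
    have h1 : ContinuousAt (fun η : ℂ × ℂ => ((η.2, η.1, (0:ℂ)) : ℂ × ℂ × ℂ)) 0 :=
      (continuous_snd.prodMk (continuous_fst.prodMk continuous_const)).continuousAt
    exact h1.eventually_mem (hUopen.mem_nhds hU0)
  have hE2 : ∀ᶠ η : ℂ × ℂ in nhds 0, (((0:ℂ), η.1, (0:ℂ)) : ℂ × ℂ × ℂ) ∈ U := by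
    have h1 : ContinuousAt (fun η : ℂ × ℂ => (((0:ℂ), η.1, (0:ℂ)) : ℂ × ℂ × ℂ)) 0 :=
      (continuous_const.prodMk (continuous_fst.prodMk continuous_const)).continuousAt
    exact h1.eventually_mem (hUopen.mem_nhds hU0)
  have hpcont : ContinuousAt
      (fun η : ℂ × ℂ => (((starRingEnd ℂ) η.1, (starRingEnd ℂ) η.2,
        (starRingEnd ℂ) (Q (η.2, η.1, 0))) : ℂ × ℂ × ℂ)) 0 := by
    refine ContinuousAt.prodMk ?_ (ContinuousAt.prodMk ?_ ?_)
    · exact (continuous_conj.comp continuous_fst).continuousAt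
    · exact (continuous_conj.comp continuous_snd).continuousAt
    · have := ContinuousAt.comp (f := fun η : ℂ × ℂ => Q (η.2, η.1, 0)) (x := 0)
        (continuous_conj.continuousAt) hQc0
      exact this
  have hpcont0 : (((starRingEnd ℂ) (0 : ℂ × ℂ).1, (starRingEnd ℂ) (0 : ℂ × ℂ).2,
      (starRingEnd ℂ) (Q ((0 : ℂ × ℂ).2, (0 : ℂ × ℂ).1, 0))) : ℂ × ℂ × ℂ)
      = ((0:ℂ), (0:ℂ), (0:ℂ)) := by
    simp only [Prod.fst_zero, Prod.snd_zero, hQ000, map_zero]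
  have hE3 : ∀ᶠ η : ℂ × ℂ in nhds 0,
      (((starRingEnd ℂ) η.1, (starRingEnd ℂ) η.2,
        (starRingEnd ℂ) (Q (η.2, η.1, 0))) : ℂ × ℂ × ℂ) ∈ U := by
    refine hpcont.eventually_mem ?_
    rw [hpcont0]
    exact hUopen.mem_nhds hU0
  have hE4 : ∀ᶠ η : ℂ × ℂ in nhds 0,
      (((starRingEnd ℂ) η.1, (starRingEnd ℂ) η.2, (0:ℂ)) : ℂ × ℂ × ℂ) ∈ V := by
    have h1 : ContinuousAt (fun η : ℂ × ℂ =>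
        (((starRingEnd ℂ) η.1, (starRingEnd ℂ) η.2, (0:ℂ)) : ℂ × ℂ × ℂ)) 0 :=
      ContinuousAt.prodMk ((continuous_conj.comp continuous_fst).continuousAt)
        (ContinuousAt.prodMk ((continuous_conj.comp continuous_snd).continuousAt)
          continuousAt_const)
    refine h1.eventually_mem (hVopen.mem_nhds ?_)
    simpa [Prod.mk_zero_zero] using hV0
  -- the main eventual statement
  have hmain : ∀ᶠ η : ℂ × ℂ in nhds 0,
      Ufn Q η.1 η.2 0 0 = 0 ∧
      deriv (fun τ => conjQ Q (η.1, η.2, τ)) (Q (η.2, η.1, 0)) =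
        (starRingEnd ℂ) (fderiv ℂ Q ((starRingEnd ℂ) η.1, (starRingEnd ℂ) η.2,
          (starRingEnd ℂ) (Q (η.2, η.1, 0))) ((0:ℂ), (0:ℂ), (1:ℂ))) ∧
      deriv (fun χ => Q (η.2, χ, 0)) η.1 =
        fderiv ℂ Q (η.2, η.1, 0) ((0:ℂ), (1:ℂ), (0:ℂ)) ∧
      Δfn Q η.1 η.2 =
        2 * (starRingEnd ℂ) (fderiv ℂ Q ((starRingEnd ℂ) η.1, (starRingEnd ℂ) η.2,
            (starRingEnd ℂ) (Q (η.2, η.1, 0))) ((0:ℂ), (0:ℂ), (1:ℂ))) *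
          fderiv ℂ Q (η.2, η.1, 0) ((0:ℂ), (1:ℂ), (0:ℂ)) := by
    filter_upwards [hE1, hE2, hE3, hE4] with η e1 e2 e3 e4
    obtain ⟨η1, η2⟩ := η
    simp only at e1 e2 e3 e4 ⊢
    have hQE1 : AnalyticAt ℂ Q (η2, η1, 0) := hQ _ e1
    have hL1 : HasFDerivAt Q
        (fderiv ℂ Q ((starRingEnd ℂ) η1, (starRingEnd ℂ) η2, (starRingEnd ℂ) (Q (η2, η1, 0))))
        ((starRingEnd ℂ) η1, (starRingEnd ℂ) η2, (starRingEnd ℂ) (Q (η2, η1, 0))) :=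
      (hQ _ e3).differentiableAt.hasFDerivAt
    set L1 := fderiv ℂ Q ((starRingEnd ℂ) η1, (starRingEnd ℂ) η2,
      (starRingEnd ℂ) (Q (η2, η1, 0))) with hL1def
    set dg := fderiv ℂ Q (η2, η1, 0) ((0:ℂ), (1:ℂ), (0:ℂ)) with hdgdef
    -- derivative of g : χ ↦ Q (η2, χ, 0) at η1
    have hg2 : HasDerivAt (fun x => Q (η2, x, 0)) dg η1 := by
      have hcurve : HasDerivAt (fun x : ℂ => ((η2, x, (0:ℂ)) : ℂ × ℂ × ℂ))
          (((0:ℂ), (1:ℂ), (0:ℂ)) : ℂ × ℂ × ℂ) η1 :=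
        HasDerivAt.prodMk (hasDerivAt_const _ _) (HasDerivAt.prodMk (hasDerivAt_id _) (hasDerivAt_const _ _))
      exact (hQE1.differentiableAt.hasFDerivAt).comp_hasDerivAt _ hcurve
    -- the conjugated slice ḡ
    have hgbar : HasDerivAt (fun x => (starRingEnd ℂ) (Q (η2, (starRingEnd ℂ) x, 0)))
        ((starRingEnd ℂ) dg) ((starRingEnd ℂ) η1) := by
      refine conj_hasDerivAt (f := fun x => Q (η2, x, 0)) ?_
      rw [conj_conj]; exact hg2
    have hgbarA : (starRingEnd ℂ) (Q (η2, (starRingEnd ℂ) ((starRingEnd ℂ) η1), 0)) =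
        (starRingEnd ℂ) (Q (η2, η1, 0)) := by rw [conj_conj]
    -- ψ and its derivative
    have hψ : HasDerivAt (fun s => Q ((starRingEnd ℂ) η1 - s, (starRingEnd ℂ) η2,
        (starRingEnd ℂ) (Q (η2, (starRingEnd ℂ) ((starRingEnd ℂ) η1 + s), 0))))
        (L1 ((-1:ℂ), (0:ℂ), (starRingEnd ℂ) dg)) 0 := by
      have h1 : HasDerivAt (fun s : ℂ => (starRingEnd ℂ) η1 + s) 1 0 :=
        (hasDerivAt_id 0).const_add ((starRingEnd ℂ) η1)
      have hgbar' : HasDerivAt (fun x => (starRingEnd ℂ) (Q (η2, (starRingEnd ℂ) x, 0)))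
          ((starRingEnd ℂ) dg) ((starRingEnd ℂ) η1 + 0) := by rwa [add_zero]
      have h2 : HasDerivAt (fun s : ℂ =>
          (starRingEnd ℂ) (Q (η2, (starRingEnd ℂ) ((starRingEnd ℂ) η1 + s), 0)))
          ((starRingEnd ℂ) dg) 0 := by
        have := hgbar'.comp 0 h1
        simpa [Function.comp_def] using this
      have ha : HasDerivAt (fun s : ℂ => (starRingEnd ℂ) η1 - s) (-1 : ℂ) 0 := by
        simpa using (hasDerivAt_id 0).const_sub ((starRingEnd ℂ) η1)
      have hcurve : HasDerivAt (fun s : ℂ => (((starRingEnd ℂ) η1 - s, (starRingEnd ℂ) η2,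
          (starRingEnd ℂ) (Q (η2, (starRingEnd ℂ) ((starRingEnd ℂ) η1 + s), 0))) : ℂ × ℂ × ℂ))
          (((-1:ℂ), (0:ℂ), (starRingEnd ℂ) dg) : ℂ × ℂ × ℂ) 0 :=
        HasDerivAt.prodMk ha (HasDerivAt.prodMk (hasDerivAt_const _ _) h2)
      have hb : HasFDerivAt Q L1 ((fun s : ℂ => (((starRingEnd ℂ) η1 - s, (starRingEnd ℂ) η2,
          (starRingEnd ℂ) (Q (η2, (starRingEnd ℂ) ((starRingEnd ℂ) η1 + s), 0))) : ℂ × ℂ × ℂ)) 0) := by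
        simpa [conj_conj] using hL1
      exact hb.comp_hasDerivAt _ hcurve
    -- vanishing of Q at the conjugate point
    have hQP1zero : Q ((starRingEnd ℂ) η1, (starRingEnd ℂ) η2,
        (starRingEnd ℂ) (Q (η2, η1, 0))) = 0 := by
      have h0 := hV _ e4
      simpa [conjQ, conj_conj, map_zero] using h0
    -- part (a)
    have hT0 : conjQ Q (η1, η2, Q (η2, η1, 0)) = 0 := by
      have h1 : conjQ Q (η1, η2, Q (η2, η1, 0)) =
          (starRingEnd ℂ) (Q ((starRingEnd ℂ) η1, (starRingEnd ℂ) η2,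
            (starRingEnd ℂ) (Q (η2, η1, 0)))) := rfl
      rw [h1, hQP1zero, map_zero]
    have parta : Ufn Q η1 η2 0 0 = 0 := by
      rw [Ufn]
      simp only [sub_zero, add_zero]
      rw [hT0]
      exact hnorm2 η1 0 e2
    -- the slice of Ufn agrees with T near 0
    have hTfun : ∀ σ : ℂ, conjQ Q (η1 - σ, η2, Q (η2, η1 + σ, 0)) =
        (starRingEnd ℂ) (Q ((starRingEnd ℂ) η1 - (starRingEnd ℂ) σ, (starRingEnd ℂ) η2,
          (starRingEnd ℂ) (Q (η2, (starRingEnd ℂ) ((starRingEnd ℂ) η1 + (starRingEnd ℂ) σ), 0)))) := by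
      intro σ
      simp only [conjQ, map_sub, map_add, conj_conj]
    have hQcE1 : ContinuousAt Q (η2, η1 + 0, 0) := by
      simpa using hQE1.continuousAt
    have hinner : ContinuousAt (fun σ : ℂ => Q (η2, η1 + σ, 0)) 0 := by
      have h1 : ContinuousAt (fun σ : ℂ => ((η2, η1 + σ, (0:ℂ)) : ℂ × ℂ × ℂ)) 0 :=
        (continuous_const.prodMk ((continuous_const.add continuous_id).prodMk
          continuous_const)).continuousAt
      have h2 := ContinuousAt.comp (f := fun σ : ℂ => ((η2, η1 + σ, (0:ℂ)) : ℂ × ℂ × ℂ))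
        (x := 0) hQcE1 h1
      exact h2
    have hconjQc : ContinuousAt (conjQ Q) (η1 - 0, η2, Q (η2, η1 + 0, 0)) := by
      have h1 : ContinuousAt (fun p : ℂ × ℂ × ℂ => (((starRingEnd ℂ) p.1, (starRingEnd ℂ) p.2.1,
          (starRingEnd ℂ) p.2.2) : ℂ × ℂ × ℂ)) (η1 - 0, η2, Q (η2, η1 + 0, 0)) :=
        ((continuous_conj.comp continuous_fst).prodMk
          ((continuous_conj.comp (continuous_fst.comp continuous_snd)).prodMk
            (continuous_conj.comp (continuous_snd.comp continuous_snd)))).continuousAt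
      have h2 : ContinuousAt Q ((starRingEnd ℂ) η1, (starRingEnd ℂ) η2,
          (starRingEnd ℂ) (Q (η2, η1, 0))) := (hQ _ e3).continuousAt
      have h2' : ContinuousAt Q ((fun p : ℂ × ℂ × ℂ => (((starRingEnd ℂ) p.1,
          (starRingEnd ℂ) p.2.1, (starRingEnd ℂ) p.2.2) : ℂ × ℂ × ℂ))
          (η1 - 0, η2, Q (η2, η1 + 0, 0))) := by simpa using h2
      have h3 := ContinuousAt.comp (g := (starRingEnd ℂ))
        (continuous_conj.continuousAt)
        (ContinuousAt.comp (f := fun p : ℂ × ℂ × ℂ => (((starRingEnd ℂ) p.1, (starRingEnd ℂ) p.2.1,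
          (starRingEnd ℂ) p.2.2) : ℂ × ℂ × ℂ)) (x := (η1 - 0, η2, Q (η2, η1 + 0, 0))) h2' h1)
      exact h3
    have hTcontAux : ContinuousAt
        (fun σ : ℂ => conjQ Q (η1 - σ, η2, Q (η2, η1 + σ, 0))) 0 := by
      have h1 : ContinuousAt (fun σ : ℂ => ((η1 - σ, η2, Q (η2, η1 + σ, 0)) : ℂ × ℂ × ℂ)) 0 :=
        ContinuousAt.prodMk ((continuous_const.sub continuous_id).continuousAt)
          (ContinuousAt.prodMk continuousAt_const hinner)
      have h2 := ContinuousAt.comp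
        (f := fun σ : ℂ => ((η1 - σ, η2, Q (η2, η1 + σ, 0)) : ℂ × ℂ × ℂ)) (x := 0) hconjQc h1
      exact h2
    have hslice : (fun σ => Ufn Q η1 η2 0 σ) =ᶠ[nhds 0]
        (fun σ => conjQ Q (η1 - σ, η2, Q (η2, η1 + σ, 0))) := by
      have hcont : ContinuousAt (fun σ : ℂ =>
          (((0:ℂ), η1 - σ, conjQ Q (η1 - σ, η2, Q (η2, η1 + σ, 0))) : ℂ × ℂ × ℂ)) 0 :=
        ContinuousAt.prodMk continuousAt_const
          (ContinuousAt.prodMk ((continuous_const.sub continuous_id).continuousAt) hTcontAux)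
      have hmemev := hcont.eventually_mem (hUopen.mem_nhds (by
        simp only [sub_zero, add_zero, hT0]
        exact e2))
      refine hmemev.mono fun σ hσ => ?_
      show Ufn Q η1 η2 0 σ = conjQ Q (η1 - σ, η2, Q (η2, η1 + σ, 0))
      rw [Ufn]
      exact hnorm2 _ _ hσ
    have hF : HasDerivAt (fun σ => conjQ Q (η1 - σ, η2, Q (η2, η1 + σ, 0)))
        ((starRingEnd ℂ) (L1 ((-1:ℂ), (0:ℂ), (starRingEnd ℂ) dg))) 0 := by
      have hψ' : HasDerivAt (fun s => Q ((starRingEnd ℂ) η1 - s, (starRingEnd ℂ) η2,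
          (starRingEnd ℂ) (Q (η2, (starRingEnd ℂ) ((starRingEnd ℂ) η1 + s), 0))))
          (L1 ((-1:ℂ), (0:ℂ), (starRingEnd ℂ) dg)) ((starRingEnd ℂ) 0) := by
        simpa using hψ
      have h1 := conj_hasDerivAt hψ'
      exact h1.congr_of_eventuallyEq (Filter.Eventually.of_forall fun σ => hTfun σ)
    have hΔval : Δfn Q η1 η2 = (starRingEnd ℂ) (L1 ((-1:ℂ), (0:ℂ), (starRingEnd ℂ) dg)) := by
      have heq := Filter.EventuallyEq.deriv_eq hslice
      rw [Δfn]
      calc deriv (Ufn Q η1 η2 0) 0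
          = deriv (fun σ => conjQ Q (η1 - σ, η2, Q (η2, η1 + σ, 0))) 0 := heq
        _ = (starRingEnd ℂ) (L1 ((-1:ℂ), (0:ℂ), (starRingEnd ℂ) dg)) := hF.deriv
    -- θ and the identity G ≡ 0
    have hθ : HasDerivAt (fun s => Q (s, (starRingEnd ℂ) η2,
        (starRingEnd ℂ) (Q (η2, (starRingEnd ℂ) s, 0))))
        (L1 ((1:ℂ), (0:ℂ), (starRingEnd ℂ) dg)) ((starRingEnd ℂ) η1) := by
      have hcurve2 : HasDerivAt (fun s : ℂ => ((s, (starRingEnd ℂ) η2,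
          (starRingEnd ℂ) (Q (η2, (starRingEnd ℂ) s, 0))) : ℂ × ℂ × ℂ))
          (((1:ℂ), (0:ℂ), (starRingEnd ℂ) dg) : ℂ × ℂ × ℂ) ((starRingEnd ℂ) η1) :=
        HasDerivAt.prodMk (hasDerivAt_id _) (HasDerivAt.prodMk (hasDerivAt_const _ _) hgbar)
      have hb : HasFDerivAt Q L1 ((fun s : ℂ => ((s, (starRingEnd ℂ) η2,
          (starRingEnd ℂ) (Q (η2, (starRingEnd ℂ) s, 0))) : ℂ × ℂ × ℂ)) ((starRingEnd ℂ) η1)) := by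
        simpa [conj_conj] using hL1
      exact hb.comp_hasDerivAt _ hcurve2
    have hGd : HasDerivAt (fun χ => (starRingEnd ℂ) ((fun s => Q (s, (starRingEnd ℂ) η2,
        (starRingEnd ℂ) (Q (η2, (starRingEnd ℂ) s, 0)))) ((starRingEnd ℂ) χ)))
        ((starRingEnd ℂ) (L1 ((1:ℂ), (0:ℂ), (starRingEnd ℂ) dg))) η1 :=
      conj_hasDerivAt hθ
    have hGev : (fun χ => (starRingEnd ℂ) ((fun s => Q (s, (starRingEnd ℂ) η2,
        (starRingEnd ℂ) (Q (η2, (starRingEnd ℂ) s, 0)))) ((starRingEnd ℂ) χ))) =ᶠ[nhds η1]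
        (fun _ => (0:ℂ)) := by
      have hcont : ContinuousAt (fun χ : ℂ =>
          (((starRingEnd ℂ) χ, (starRingEnd ℂ) η2, (0:ℂ)) : ℂ × ℂ × ℂ)) η1 :=
        (continuous_conj.prodMk (continuous_const.prodMk continuous_const)).continuousAt
      have hev := hcont.eventually_mem (hVopen.mem_nhds e4)
      refine hev.mono fun χ hχ => ?_
      have h0 := hV _ hχ
      have hz : Q ((starRingEnd ℂ) χ, (starRingEnd ℂ) η2,
          (starRingEnd ℂ) (Q (η2, (starRingEnd ℂ) ((starRingEnd ℂ) χ), 0))) = 0 := by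
        simpa [conjQ, conj_conj, map_zero] using h0
      simp only [hz, map_zero]
    have hzero : L1 ((1:ℂ), (0:ℂ), (starRingEnd ℂ) dg) = 0 := by
      have h1 : HasDerivAt (fun _ : ℂ => (0:ℂ))
          ((starRingEnd ℂ) (L1 ((1:ℂ), (0:ℂ), (starRingEnd ℂ) dg))) η1 :=
        hGd.congr_of_eventuallyEq hGev.symm
      have h2 := h1.unique (hasDerivAt_const _ _)
      have h3 := congrArg (starRingEnd ℂ) h2
      simpa [conj_conj, map_zero] using h3
    -- linear algebra
    have hlin : L1 ((-1:ℂ), (0:ℂ), (starRingEnd ℂ) dg) =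
        2 * (starRingEnd ℂ) dg * L1 ((0:ℂ), (0:ℂ), (1:ℂ)) := by
      have hdecomp : (((-1:ℂ), (0:ℂ), (starRingEnd ℂ) dg) : ℂ × ℂ × ℂ) =
          (2 * (starRingEnd ℂ) dg) • (((0:ℂ), (0:ℂ), (1:ℂ)) : ℂ × ℂ × ℂ) -
            ((1:ℂ), (0:ℂ), (starRingEnd ℂ) dg) := by
        simp only [Prod.smul_mk, smul_eq_mul, Prod.mk_sub_mk, mul_one, mul_zero, Prod.mk.injEq]
        refine ⟨by ring, by ring, by ring⟩
      rw [hdecomp, map_sub, map_smul, hzero, sub_zero, smul_eq_mul]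
    -- derivative of τ ↦ conjQ Q (η1, η2, τ)
    have hq : HasDerivAt (fun t => Q ((starRingEnd ℂ) η1, (starRingEnd ℂ) η2, t))
        (L1 ((0:ℂ), (0:ℂ), (1:ℂ))) ((starRingEnd ℂ) (Q (η2, η1, 0))) := by
      have hcurve3 : HasDerivAt (fun t : ℂ =>
          (((starRingEnd ℂ) η1, (starRingEnd ℂ) η2, t) : ℂ × ℂ × ℂ))
          (((0:ℂ), (0:ℂ), (1:ℂ)) : ℂ × ℂ × ℂ) ((starRingEnd ℂ) (Q (η2, η1, 0))) :=
        HasDerivAt.prodMk (hasDerivAt_const _ _) (HasDerivAt.prodMk (hasDerivAt_const _ _) (hasDerivAt_id _))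
      exact hL1.comp_hasDerivAt _ hcurve3
    have hA : HasDerivAt (fun τ => conjQ Q (η1, η2, τ))
        ((starRingEnd ℂ) (L1 ((0:ℂ), (0:ℂ), (1:ℂ)))) (Q (η2, η1, 0)) := by
      have h1 := conj_hasDerivAt hq
      exact h1
    refine ⟨parta, hA.deriv, hg2.deriv, ?_⟩
    rw [hΔval, hlin]
    rw [map_mul, map_mul, conj_conj]
    rw [show (starRingEnd ℂ) (2:ℂ) = 2 from map_ofNat _ 2]
    ring
  refine ⟨hmain.mono fun η h => h.1, hmain.mono fun η h => ?_, ?_⟩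
  · rw [h.2.2.2, h.2.1, h.2.2.1]
  · intro hhyp hΔ
    apply hhyp
    -- continuity of the coefficient
    have hfan : AnalyticOnNhd ℂ (fderiv ℂ Q) U := hQ.fderiv
    have hfc : ContinuousAt (fderiv ℂ Q) (((0:ℂ), (0:ℂ), (0:ℂ)) : ℂ × ℂ × ℂ) :=
      (hfan _ hU0).continuousAt
    have hfc' : ContinuousAt (fderiv ℂ Q)
        ((((starRingEnd ℂ) (0 : ℂ × ℂ).1, (starRingEnd ℂ) (0 : ℂ × ℂ).2,
          (starRingEnd ℂ) (Q ((0 : ℂ × ℂ).2, (0 : ℂ × ℂ).1, 0))) : ℂ × ℂ × ℂ)) := by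
      rw [hpcont0]
      exact hfc
    have hcomp : ContinuousAt (fun η : ℂ × ℂ =>
        fderiv ℂ Q (((starRingEnd ℂ) η.1, (starRingEnd ℂ) η.2,
          (starRingEnd ℂ) (Q (η.2, η.1, 0))) : ℂ × ℂ × ℂ)) 0 := by
      have := ContinuousAt.comp (f := fun η : ℂ × ℂ => (((starRingEnd ℂ) η.1, (starRingEnd ℂ) η.2,
        (starRingEnd ℂ) (Q (η.2, η.1, 0))) : ℂ × ℂ × ℂ)) (x := 0) hfc' hpcont
      exact this
    have happ : ContinuousAt (fun η : ℂ × ℂ =>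
        (starRingEnd ℂ) (fderiv ℂ Q (((starRingEnd ℂ) η.1, (starRingEnd ℂ) η.2,
          (starRingEnd ℂ) (Q (η.2, η.1, 0))) : ℂ × ℂ × ℂ) ((0:ℂ), (0:ℂ), (1:ℂ)))) 0 := by
      have h1 := ContinuousAt.comp
        ((ContinuousLinearMap.apply ℂ ℂ (((0:ℂ), (0:ℂ), (1:ℂ)) : ℂ × ℂ × ℂ)).continuous.continuousAt)
        hcomp
      have h2 := ContinuousAt.comp (continuous_conj.continuousAt) h1
      exact h2
    -- the value at 0 is 1
    have hE0 : fderiv ℂ Q (((0:ℂ), (0:ℂ), (0:ℂ)) : ℂ × ℂ × ℂ) ((0:ℂ), (0:ℂ), (1:ℂ)) = 1 := by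
      have hL0 : HasFDerivAt Q (fderiv ℂ Q (((0:ℂ), (0:ℂ), (0:ℂ)) : ℂ × ℂ × ℂ))
          (((0:ℂ), (0:ℂ), (0:ℂ)) : ℂ × ℂ × ℂ) := (hQ _ hU0).differentiableAt.hasFDerivAt
      have hcurve : HasDerivAt (fun t : ℂ => (((0:ℂ), (0:ℂ), t) : ℂ × ℂ × ℂ))
          (((0:ℂ), (0:ℂ), (1:ℂ)) : ℂ × ℂ × ℂ) 0 :=
        HasDerivAt.prodMk (hasDerivAt_const _ _) (HasDerivAt.prodMk (hasDerivAt_const _ _) (hasDerivAt_id _))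
      have h1 : HasDerivAt (fun t : ℂ => Q (0, 0, t))
          (fderiv ℂ Q (((0:ℂ), (0:ℂ), (0:ℂ)) : ℂ × ℂ × ℂ) ((0:ℂ), (0:ℂ), (1:ℂ))) 0 :=
        hL0.comp_hasDerivAt _ hcurve
      have h2 : (fun t : ℂ => Q (0, 0, t)) =ᶠ[nhds (0:ℂ)] (fun t => t) := by
        have hcont : ContinuousAt (fun t : ℂ => (((0:ℂ), (0:ℂ), t) : ℂ × ℂ × ℂ)) 0 :=
          (continuous_const.prodMk (continuous_const.prodMk continuous_id)).continuousAt
        have hev := hcont.eventually_mem (hUopen.mem_nhds hU0)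
        exact hev.mono fun t ht => hnorm1 0 t ht
      have h3 : HasDerivAt (fun t : ℂ => t)
          (fderiv ℂ Q (((0:ℂ), (0:ℂ), (0:ℂ)) : ℂ × ℂ × ℂ) ((0:ℂ), (0:ℂ), (1:ℂ))) 0 :=
        h1.congr_of_eventuallyEq h2.symm
      exact h3.unique (hasDerivAt_id 0)
    have hval : (starRingEnd ℂ) (fderiv ℂ Q (((starRingEnd ℂ) (0 : ℂ × ℂ).1,
        (starRingEnd ℂ) (0 : ℂ × ℂ).2, (starRingEnd ℂ) (Q ((0 : ℂ × ℂ).2, (0 : ℂ × ℂ).1, 0)))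
          : ℂ × ℂ × ℂ) ((0:ℂ), (0:ℂ), (1:ℂ))) = 1 := by
      rw [hpcont0, hE0, map_one]
    have hne : ∀ᶠ η : ℂ × ℂ in nhds 0,
        (starRingEnd ℂ) (fderiv ℂ Q (((starRingEnd ℂ) η.1, (starRingEnd ℂ) η.2,
          (starRingEnd ℂ) (Q (η.2, η.1, 0))) : ℂ × ℂ × ℂ) ((0:ℂ), (0:ℂ), (1:ℂ))) ≠ 0 := by
      have ht : Filter.Tendsto (fun η : ℂ × ℂ =>
          (starRingEnd ℂ) (fderiv ℂ Q (((starRingEnd ℂ) η.1, (starRingEnd ℂ) η.2,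
            (starRingEnd ℂ) (Q (η.2, η.1, 0))) : ℂ × ℂ × ℂ) ((0:ℂ), (0:ℂ), (1:ℂ))))
          (nhds 0) (nhds 1) := by
        have h1 := happ.tendsto
        rw [hval] at h1
        exact h1
      exact ht.eventually_ne one_ne_zero
    have hBB : ∀ᶠ η : ℂ × ℂ in nhds 0, deriv (fun χ => Q (η.2, χ, 0)) η.1 = 0 := by
      filter_upwards [hmain, hΔ, hne] with η hm hΔη hneη
      have h1 : (2 : ℂ) * (starRingEnd ℂ) (fderiv ℂ Q (((starRingEnd ℂ) η.1, (starRingEnd ℂ) η.2,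
          (starRingEnd ℂ) (Q (η.2, η.1, 0))) : ℂ × ℂ × ℂ) ((0:ℂ), (0:ℂ), (1:ℂ))) *
          fderiv ℂ Q (η.2, η.1, 0) ((0:ℂ), (1:ℂ), (0:ℂ)) = 0 := by
        rw [← hm.2.2.2]; exact hΔη
      have h2 : fderiv ℂ Q (η.2, η.1, 0) ((0:ℂ), (1:ℂ), (0:ℂ)) = 0 := by
        rcases mul_eq_zero.mp h1 with h | h
        · rcases mul_eq_zero.mp h with h' | h'
          · exact absurd h' two_ne_zero
          · exact absurd h' hneη
        · exact h
      rw [hm.2.2.1, h2]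
    have hswap : Filter.Tendsto (fun p : ℂ × ℂ => ((p.2, p.1) : ℂ × ℂ)) (nhds 0) (nhds 0) := by
      have := (continuous_snd.prodMk continuous_fst).tendsto (0 : ℂ × ℂ)
      simpa [Prod.mk_zero_zero] using this
    exact hswap.eventually hBB
end

section
/- Let M ⊂ ℂ² be the real-analytic hypersurface given in normal coordinates by a holomorphic Q near 0 ∈ ℂ³ with Q(z,0,τ) ≡ Q(0,χ,τ) ≡ τ, the reality identity Q(z,χ,Q̄(χ,z,w)) ≡ w, and the finite type condition Q(z,χ,0) ≢ 0. Let M' ⊂ ℂ² be another real-analytic hypersurface given in normal coordinates by Q̃ holomorphic near 0 ∈ ℂ³ with Q̃(z̃,0,τ̃) ≡ Q̃(0,χ̃,τ̃) ≡ τ̃ and Q̃(z̃,χ̃,Q̃̄(χ̃,z̃,w̃)) ≡ w̃. Let v¹, v², v³, v⁴ (with second components u¹ = 0, u², u³, u⁴) be the iterated Segre mappings of M, and ũ⁴ the corresponding function for M'. Let H = (F, G) : (ℂ², 0) → (ℂ², 0) be a germ of a holomorphic map with H(0) = 0, and set F̄(ζ) := conj(F(conj ζ)), v̄³(t¹,t²,t³)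 := (t³, Q̄(t³, t², Q(t², t¹, 0))). If the holomorphic identity G(v⁴(t¹,t²,t³,t⁴)) = ũ⁴( F̄(t¹, 0), F(v²(t¹,t²)), F̄(v̄³(t¹,t²,t³)), F(v⁴(t¹,t²,t³,t⁴)) ) holds for all (t¹,t²,t³,t⁴) near 0 ∈ ℂ⁴, then H maps M into M': there is a neighborhood of 0 such that for all (z,w) in it with w = Q(z, conj z, conj w) one has G(z,w) = Q̃(F(z,w), conj(F(z,w)), conj(G(z,w))). -/
open Filter Complex

/-- Conjugation on `ℂ × ℂ`. -/
noncomputable def conj2 (p : ℂ × ℂ) : ℂ × ℂ := ((starRingEnd ℂ) p.1, (starRingEnd ℂ) p.2)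

/-- Second iterated Segre mapping `v²(t¹,t²) = (t², Q(t²,t¹,0))`. -/
noncomputable def segre2 (Q : ℂ × ℂ × ℂ → ℂ) (t1 t2 : ℂ) : ℂ × ℂ := (t2, Q (t2, t1, 0))

/-- Third iterated Segre mapping `v³(t¹,t²,t³) = (t³, Q(t³,t², Q̄(t²,t¹,0)))`. -/
noncomputable def segre3 (Q : ℂ × ℂ × ℂ → ℂ) (t1 t2 t3 : ℂ) : ℂ × ℂ :=
  (t3, Q (t3, t2, conjQ Q (t2, t1, 0)))

/-- Conjugated third Segre mapping `v̄³(t¹,t²,t³) = (t³, Q̄(t³,t², Q(t²,t¹,0)))`. -/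
noncomputable def segre3bar (Q : ℂ × ℂ × ℂ → ℂ) (t1 t2 t3 : ℂ) : ℂ × ℂ :=
  (t3, conjQ Q (t3, t2, Q (t2, t1, 0)))

/-- Fourth iterated Segre mapping `v⁴(t¹,t²,t³,t⁴) = (t⁴, Q(t⁴,t³, Q̄(t³,t², Q(t²,t¹,0))))`. -/
noncomputable def segre4 (Q : ℂ × ℂ × ℂ → ℂ) (t1 t2 t3 t4 : ℂ) : ℂ × ℂ :=
  (t4, Q (t4, t3, conjQ Q (t3, t2, Q (t2, t1, 0))))

/-- Second component `ũ⁴` of the fourth iterated Segre mapping of the target. -/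
noncomputable def u4 (Qt : ℂ × ℂ × ℂ → ℂ) (s1 s2 s3 s4 : ℂ) : ℂ :=
  Qt (s4, s3, conjQ Qt (s3, s2, Qt (s2, s1, 0)))

/-- If `H=(F,G)` satisfies the basic identity along the fourth iterated Segre mapping,
then `H` maps `M` into `M'`. -/
theorem segre_identity_implies_maps_into
    (Q : ℂ × ℂ × ℂ → ℂ)
    (U : Set (ℂ × ℂ × ℂ)) (hUopen : IsOpen U) (hU0 : ((0 : ℂ), (0 : ℂ), (0 : ℂ)) ∈ U)
    (hQ : AnalyticOnNhd ℂ Q U)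
    (hnorm1 : ∀ z τ : ℂ, (z, (0 : ℂ), τ) ∈ U → Q (z, 0, τ) = τ)
    (hnorm2 : ∀ χ τ : ℂ, ((0 : ℂ), χ, τ) ∈ U → Q (0, χ, τ) = τ)
    (hrealQ : ∀ᶠ p : ℂ × ℂ × ℂ in nhds 0,
      Q (p.1, p.2.1, conjQ Q (p.2.1, p.1, p.2.2)) = p.2.2)
    (hft : ¬ ∀ᶠ p : ℂ × ℂ in nhds 0, Q (p.1, p.2, 0) = 0)
    (Qt : ℂ × ℂ × ℂ → ℂ)
    (U' : Set (ℂ × ℂ × ℂ)) (hU'open : IsOpen U') (hU'0 : ((0 : ℂ), (0 : ℂ), (0 : ℂ)) ∈ U')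
    (hQt : AnalyticOnNhd ℂ Qt U')
    (hnorm1' : ∀ z τ : ℂ, (z, (0 : ℂ), τ) ∈ U' → Qt (z, 0, τ) = τ)
    (hnorm2' : ∀ χ τ : ℂ, ((0 : ℂ), χ, τ) ∈ U' → Qt (0, χ, τ) = τ)
    (hrealQt : ∀ᶠ p : ℂ × ℂ × ℂ in nhds 0,
      Qt (p.1, p.2.1, conjQ Qt (p.2.1, p.1, p.2.2)) = p.2.2)
    (F G : ℂ × ℂ → ℂ) (hF : AnalyticAt ℂ F 0) (hF0 : F 0 = 0)
    (hG : AnalyticAt ℂ G 0) (hG0 : G 0 = 0)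
    (hid : ∀ᶠ t : ℂ × ℂ × ℂ × ℂ in nhds 0,
      G (segre4 Q t.1 t.2.1 t.2.2.1 t.2.2.2) =
        u4 Qt ((starRingEnd ℂ) (F ((starRingEnd ℂ) t.1, 0)))
          (F (segre2 Q t.1 t.2.1))
          ((starRingEnd ℂ) (F (conj2 (segre3bar Q t.1 t.2.1 t.2.2.1))))
          (F (segre4 Q t.1 t.2.1 t.2.2.1 t.2.2.2))) :
    ∀ᶠ p : ℂ × ℂ in nhds 0,
      p.2 = Q (p.1, (starRingEnd ℂ) p.1, (starRingEnd ℂ) p.2) →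
        G p = Qt (F p, (starRingEnd ℂ) (F p), (starRingEnd ℂ) (G p)) := by
  classical
  -- balls inside U, U'
  obtain ⟨εU, hεU, hballU⟩ := Metric.isOpen_iff.1 hUopen 0 hU0
  obtain ⟨εU', hεU', hballU'⟩ := Metric.isOpen_iff.1 hU'open 0 hU'0
  obtain ⟨εr, hεr, hreal⟩ := Metric.eventually_nhds_iff.1 hrealQ
  obtain ⟨εid, hεid, hid'⟩ := Metric.eventually_nhds_iff.1 hid
  obtain ⟨δF, hδF, hFsmall⟩ := Metric.continuousAt_iff.1 hF.continuousAt εU' hεU'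
  set δ := min (min εU εU') (min εr (min εid δF)) with hδdef
  have hδpos : 0 < δ := lt_min (lt_min hεU hεU') (lt_min hεr (lt_min hεid hδF))
  have hδU : δ ≤ εU := le_trans (min_le_left _ _) (min_le_left _ _)
  have hδU' : δ ≤ εU' := le_trans (min_le_left _ _) (min_le_right _ _)
  have hδr : δ ≤ εr := le_trans (min_le_right _ _) (min_le_left _ _)
  have hδid : δ ≤ εid := le_trans (min_le_right _ _)
    (le_trans (min_le_right _ _) (min_le_left _ _))
  have hδF' : δ ≤ δF := le_trans (min_le_right _ _)
    (le_trans (min_le_right _ _) (min_le_right _ _))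
  -- membership helpers
  have mem3 : ∀ (ε : ℝ) (a b d : ℂ), ‖a‖ < ε → ‖b‖ < ε → ‖d‖ < ε →
      dist ((a, b, d) : ℂ × ℂ × ℂ) 0 < ε := by
    intro ε a b d ha hb hd
    rw [dist_zero_right]
    simp only [Prod.norm_def, max_lt_iff]
    exact ⟨ha, hb, hd⟩
  have mem4 : ∀ (ε : ℝ) (a b d g : ℂ), ‖a‖ < ε → ‖b‖ < ε → ‖d‖ < ε → ‖g‖ < ε →
      dist ((a, b, d, g) : ℂ × ℂ × ℂ × ℂ) 0 < ε := by
    intro ε a b d g ha hb hd hg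
    rw [dist_zero_right]
    simp only [Prod.norm_def, max_lt_iff]
    exact ⟨ha, hb, hd, hg⟩
  have memU : ∀ a b d : ℂ, ‖a‖ < δ → ‖b‖ < δ → ‖d‖ < δ → (a, b, d) ∈ U := by
    intro a b d ha hb hd
    exact hballU (Metric.mem_ball.2 (mem3 εU a b d (lt_of_lt_of_le ha hδU)
      (lt_of_lt_of_le hb hδU) (lt_of_lt_of_le hd hδU)))
  have memU' : ∀ a b d : ℂ, ‖a‖ < εU' → ‖b‖ < εU' → ‖d‖ < εU' → (a, b, d) ∈ U' := by
    intro a b d ha hb hd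
    exact hballU' (Metric.mem_ball.2 (mem3 εU' a b d ha hb hd))
  -- find a point where Q(·,·,0) ≠ 0
  rw [Metric.eventually_nhds_iff] at hft
  push_neg at hft
  obtain ⟨q, hqdist, hqne⟩ := hft δ hδpos
  have hq1 : ‖q.1‖ < δ := lt_of_le_of_lt (norm_fst_le q) (by rwa [dist_zero_right] at hqdist)
  have hq2 : ‖q.2‖ < δ := lt_of_le_of_lt (norm_snd_le q) (by rwa [dist_zero_right] at hqdist)
  -- the slice function ψ e = Q (q.1, e, 0)
  have hψ : AnalyticOnNhd ℂ (fun e : ℂ => Q (q.1, e, 0)) (Metric.ball 0 δ) := by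
    intro e he
    have hmap : AnalyticAt ℂ (fun e : ℂ => ((q.1 : ℂ), (e, (0 : ℂ)))) e :=
      analyticAt_const.prod ((analyticAt_id).prod analyticAt_const)
    have heq : (fun e : ℂ => Q (q.1, e, 0)) = Q ∘ (fun e : ℂ => ((q.1 : ℂ), (e, (0 : ℂ)))) := rfl
    rw [heq]
    exact AnalyticAt.comp (g := Q) (f := fun e : ℂ => ((q.1 : ℂ), (e, (0 : ℂ)))) (x := e)
      (hQ _ (memU q.1 e 0 hq1 (by rwa [Metric.mem_ball, dist_zero_right] at he)
        (by simp [hδpos]))) hmap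
  have hψ0 : Q (q.1, (0 : ℂ), (0 : ℂ)) = 0 :=
    hnorm1 q.1 0 (memU q.1 0 0 hq1 (by simp [hδpos]) (by simp [hδpos]))
  -- open mapping theorem
  have hopen : IsOpen ((fun e : ℂ => Q (q.1, e, 0)) '' Metric.ball 0 δ) := by
    rcases hψ.is_constant_or_isOpen (convex_ball 0 δ).isPreconnected with ⟨v, hv⟩ | hopen
    · exfalso
      have h1 := hv 0 (Metric.mem_ball_self hδpos)
      have h2 := hv q.2 (by rwa [Metric.mem_ball, dist_zero_right])
      rw [hψ0] at h1
      exact hqne (by rw [h2, ← h1])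
    · exact hopen _ (le_refl _) Metric.isOpen_ball
  have h0mem : (0 : ℂ) ∈ (fun e : ℂ => Q (q.1, e, 0)) '' Metric.ball 0 δ :=
    ⟨0, Metric.mem_ball_self hδpos, hψ0⟩
  obtain ⟨ρ, hρpos, hρ⟩ := Metric.isOpen_iff.1 hopen 0 h0mem
  -- continuity of p ↦ Q (q.1, conj p.1, conj p.2) at 0
  have hcont : ContinuousAt
      (fun p : ℂ × ℂ => Q (q.1, (starRingEnd ℂ) p.1, (starRingEnd ℂ) p.2)) 0 := by
    have h1 : ContinuousAt Q (q.1, 0, 0) :=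
      (hQ _ (memU q.1 0 0 hq1 (by simp [hδpos]) (by simp [hδpos]))).continuousAt
    have h2 : ContinuousAt
        (fun p : ℂ × ℂ => ((q.1 : ℂ), (starRingEnd ℂ) p.1, (starRingEnd ℂ) p.2)) 0 := by
      apply Continuous.continuousAt
      exact continuous_const.prodMk
        (((continuous_conj.comp continuous_fst)).prodMk (continuous_conj.comp continuous_snd))
    have h1' : ContinuousAt Q
        ((fun p : ℂ × ℂ => ((q.1 : ℂ), (starRingEnd ℂ) p.1, (starRingEnd ℂ) p.2)) 0) := by
      simp only [Prod.fst_zero, Prod.snd_zero, map_zero]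
      exact h1
    exact ContinuousAt.comp (g := Q)
      (f := fun p : ℂ × ℂ => ((q.1 : ℂ), (starRingEnd ℂ) p.1, (starRingEnd ℂ) p.2)) (x := 0)
      h1' h2
  have hev2 : ∀ᶠ p : ℂ × ℂ in nhds 0,
      ‖Q (q.1, (starRingEnd ℂ) p.1, (starRingEnd ℂ) p.2)‖ < ρ := by
    have hmemb : Metric.ball (0 : ℂ) ρ ∈ nhds
        ((fun p : ℂ × ℂ => Q (q.1, (starRingEnd ℂ) p.1, (starRingEnd ℂ) p.2)) 0) := by
      simp only [Prod.fst_zero, Prod.snd_zero, map_zero, hψ0]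
      exact Metric.ball_mem_nhds _ hρpos
    filter_upwards [hcont.eventually_mem hmemb] with p hp
    rwa [Metric.mem_ball, dist_zero_right] at hp
  have hev1 : ∀ᶠ p : ℂ × ℂ in nhds 0, ‖p‖ < δ :=
    Metric.eventually_nhds_iff.2 ⟨δ, hδpos, fun y hy => by rwa [dist_zero_right] at hy⟩
  -- main argument
  filter_upwards [hev1, hev2] with p hp1 hp2 hM
  obtain ⟨z, w⟩ := p
  have hz : ‖z‖ < δ := lt_of_le_of_lt (norm_fst_le ((z, w) : ℂ × ℂ)) hp1
  have hw : ‖w‖ < δ := lt_of_le_of_lt (norm_snd_le ((z, w) : ℂ × ℂ)) hp1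
  simp only at hM hp2 ⊢
  -- solve Q (q.1, e, 0) = Q (q.1, conj z, conj w)
  obtain ⟨e, hemem, hke⟩ := hρ (Metric.mem_ball.2 (by rwa [dist_zero_right]) :
    Q (q.1, (starRingEnd ℂ) z, (starRingEnd ℂ) w) ∈ Metric.ball (0 : ℂ) ρ)
  have he : ‖e‖ < δ := by rwa [Metric.mem_ball, dist_zero_right] at hemem
  set k := Q (q.1, e, 0) with hk
  have hke' : k = Q (q.1, (starRingEnd ℂ) z, (starRingEnd ℂ) w) := hke
  -- the key reality identity at (z, conj q.1, w)
  have hRz : Q (z, (starRingEnd ℂ) q.1, conjQ Q ((starRingEnd ℂ) q.1, z, w)) = w :=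
    hreal (mem3 εr z ((starRingEnd ℂ) q.1) w (lt_of_lt_of_le hz hδr)
      (by rw [RCLike.norm_conj]; exact lt_of_lt_of_le hq1 hδr) (lt_of_lt_of_le hw hδr))
  -- conj k = conjQ Q (conj q.1, z, w)
  have hck : (starRingEnd ℂ) k = conjQ Q ((starRingEnd ℂ) q.1, z, w) := by
    rw [hke']
    simp only [conjQ, Complex.conj_conj]
  -- conjQ Q (conj z, q.1, k) = conj w
  have h1 : conjQ Q ((starRingEnd ℂ) z, q.1, k) = (starRingEnd ℂ) w := by
    have hh : conjQ Q ((starRingEnd ℂ) z, q.1, k) =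
        (starRingEnd ℂ) (Q (z, (starRingEnd ℂ) q.1, (starRingEnd ℂ) k)) := by
      simp only [conjQ, Complex.conj_conj]
    rw [hh, hck, hRz]
  -- first application of hid at t = (e, q.1, conj z, z)
  have hidt := hid' (mem4 εid e q.1 ((starRingEnd ℂ) z) z (lt_of_lt_of_le he hδid)
    (lt_of_lt_of_le hq1 hδid) (by rw [RCLike.norm_conj]; exact lt_of_lt_of_le hz hδid)
    (lt_of_lt_of_le hz hδid))
  simp only [segre4, segre3bar, segre2, conj2] at hidt
  rw [← hk] at hidt
  rw [h1] at hidt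
  simp only [Complex.conj_conj] at hidt
  rw [← hM] at hidt
  -- second application of hid at r = (0, conj e, conj q.1, z)
  have hQe00 : Q ((starRingEnd ℂ) e, 0, 0) = 0 :=
    hnorm1 ((starRingEnd ℂ) e) 0 (memU ((starRingEnd ℂ) e) 0 0 (by rwa [RCLike.norm_conj])
      (by simp [hδpos]) (by simp [hδpos]))
  have hck0 : conjQ Q ((starRingEnd ℂ) q.1, (starRingEnd ℂ) e, 0) = (starRingEnd ℂ) k := by
    simp only [conjQ, Complex.conj_conj, map_zero, hk]
  have hidr := hid' (mem4 εid 0 ((starRingEnd ℂ) e) ((starRingEnd ℂ) q.1) z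
    (by simpa using lt_of_lt_of_le hδpos hδid)
    (by rw [RCLike.norm_conj]; exact lt_of_lt_of_le he hδid)
    (by rw [RCLike.norm_conj]; exact lt_of_lt_of_le hq1 hδid) (lt_of_lt_of_le hz hδid))
  simp only [segre4, segre3bar, segre2, conj2] at hidr
  rw [hQe00] at hidr
  rw [hck0] at hidr
  simp only [Complex.conj_conj, map_zero] at hidr
  rw [hck] at hidr
  rw [hRz] at hidr
  rw [show ((0 : ℂ), (0 : ℂ)) = (0 : ℂ × ℂ) from rfl, hF0, map_zero] at hidr
  -- simplify the innermost Qt in hidr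
  have hFe : ‖F ((starRingEnd ℂ) e, 0)‖ < εU' := by
    have hd : dist (((starRingEnd ℂ) e, (0 : ℂ)) : ℂ × ℂ) 0 < δF := by
      rw [dist_zero_right]
      simp only [Prod.norm_def, max_lt_iff]
      constructor
      · rw [RCLike.norm_conj]; exact lt_of_lt_of_le he hδF'
      · simpa using lt_of_lt_of_le hδpos hδF'
    have hdd := hFsmall hd
    rwa [hF0, dist_zero_right] at hdd
  have hQtFe : Qt (F ((starRingEnd ℂ) e, 0), 0, 0) = 0 :=
    hnorm1' _ 0 (memU' _ 0 0 hFe (by simpa using hεU') (by simpa using hεU'))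
  simp only [u4] at hidt hidr
  rw [hQtFe] at hidr
  -- conjugate hidr
  have hconj : (starRingEnd ℂ) (G (z, w)) =
      conjQ Qt ((starRingEnd ℂ) (F (z, w)), F (q.1, k),
        Qt (F (q.1, k), (starRingEnd ℂ) (F ((starRingEnd ℂ) e, 0)), 0)) := by
    rw [hidr]
    simp only [conjQ, Complex.conj_conj, map_zero]
  rw [← hconj] at hidt
  exact hidt
end
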